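/- arXiv:0804.0475 — 6 statements merged into one kernel-verified Lean document; each statement's English description precedes it below -/
import Mathlib

section
/- Let Γ be a tree on the vertex set [m+1] and let A(Γ) be its generic matrix. Then for each j = 1,...,m+1, the maximal minor v_j of A(Γ) obtained by omitting the j-th column equals, up to sign, the monomial ∏_{i=1, i≠j}^{m+1} x_{i,b(i,j)}. -/
open MvPolynomial

namespace CMCodim2

noncomputable section

/-- The total degree of an exponent vector (of a monomial). -/
def mdeg {σ : Type*} (a : σ →₀ ℕ) : ℕ := a.sum fun _ e => e

/-- The height (codimension) of an ideal: the infimum of the heights of the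
prime ideals containing it. -/
def idealHeight {R : Type*} [CommRing R] (I : Ideal R) : ℕ∞ :=
  ⨅ (p : PrimeSpectrum R) (_ : I ≤ p.asIdeal), Order.height p

/-- An ideal `I` of a polynomial ring is a Cohen–Macaulay ideal of codimension `2`
iff it has height `2` and `R/I` has a free resolution
`0 → R^a → R^b → R → R/I → 0` of length `2` (Auslander–Buchsbaum). -/
def IsCMCodim2 {R : Type*} [CommRing R] (I : Ideal R) : Prop :=
  idealHeight I = 2 ∧
    ∃ (a b : ℕ) (f : (Fin a → R) →ₗ[R] (Fin b → R)) (g : (Fin b → R) →ₗ[R] R),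
      Function.Injective f ∧ LinearMap.range f = LinearMap.ker g ∧
        LinearMap.range g = I

/-- The map `φ₁ : S^{m+1} → S`, `e_i ↦ u_i`, where `u_i` is the (monic) monomial
with exponent vector `d i`. -/
def phi (K : Type*) [Field K] {σ : Type*} (m : ℕ) (d : Fin (m + 1) → (σ →₀ ℕ)) :
    (Fin (m + 1) → MvPolynomial σ K) →ₗ[MvPolynomial σ K] MvPolynomial σ K where
  toFun v := ∑ i, v i * monomial (d i) 1
  map_add' x y := by simp [add_mul, Finset.sum_add_distrib]
  map_smul' c x := by simp [Finset.mul_sum, mul_assoc]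

/-- The Taylor relation `r_{ij} = u_{ji} e_j - u_{ij} e_i ∈ S^{m+1}` of the monomials
`u_i, u_j` with exponent vectors `d i, d j`; here `u_{ji} = u_i / gcd(u_i,u_j)`
has exponent vector `d i - d j` (truncated subtraction). -/
def taylorRel (K : Type*) [Field K] {σ : Type*} (m : ℕ) (d : Fin (m + 1) → (σ →₀ ℕ))
    (i j : Fin (m + 1)) : Fin (m + 1) → MvPolynomial σ K := fun k =>
  if k = j then monomial (d i - d j) 1
  else if k = i then -(monomial (d j - d i) 1) else 0

/-- `t` lists the `m` (unordered) pairs of indices of Taylor relations forming the rows of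
a Hilbert–Burch matrix of the ideal generated by the `m+1` monomials with exponent
vectors `d i`: the corresponding Taylor relations generate (hence, being `m` elements
generating the free rank-`m` module, minimally generate) the first syzygy module
`U = ker φ₁`. -/
def IsHB (K : Type*) [Field K] {σ : Type*} (m : ℕ) (d : Fin (m + 1) → (σ →₀ ℕ))
    (t : Fin m → Fin (m + 1) × Fin (m + 1)) : Prop :=
  (∀ k, (t k).1 ≠ (t k).2) ∧
    Submodule.span (MvPolynomial σ K)
        (Set.range fun k => taylorRel K m d (t k).1 (t k).2) =
      LinearMap.ker (phi K m d)

/-- The graph on `[m+1]` whose edges `{i,j}` are the pairs of columns in which the rows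
of a Hilbert–Burch matrix (given by the list `t` of pairs) have their nonzero entries. -/
def relGraph {m : ℕ} (t : Fin m → Fin (m + 1) × Fin (m + 1)) :
    SimpleGraph (Fin (m + 1)) :=
  SimpleGraph.fromRel fun i j => ∃ k, t k = (i, j)

/-- `T(I)`: the set of relation trees (graphs of Hilbert–Burch matrices) of the ideal
generated by the `m+1` monomials with exponent vectors `d i`. -/
def relTrees (K : Type*) [Field K] {σ : Type*} (m : ℕ) (d : Fin (m + 1) → (σ →₀ ℕ)) :
    Set (SimpleGraph (Fin (m + 1))) :=
  {Γ | ∃ t, IsHB K m d t ∧ relGraph t = Γ}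

/-- The Taylor graph `G(I)`: the union of all relation trees of `I`. -/
def taylorGraph (K : Type*) [Field K] {σ : Type*} (m : ℕ)
    (d : Fin (m + 1) → (σ →₀ ℕ)) : SimpleGraph (Fin (m + 1)) :=
  sSup (relTrees K m d)

/-- `I` is (the monomial ideal) minimally generated by the `m+1` monic monomials with
exponent vectors `d i`. -/
def MinGens (K : Type*) [Field K] {σ : Type*} (m : ℕ) (d : Fin (m + 1) → (σ →₀ ℕ))
    (I : Ideal (MvPolynomial σ K)) : Prop :=
  I = Ideal.span (Set.range fun i => (monomial (d i) 1 : MvPolynomial σ K)) ∧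
    ∀ j : Fin (m + 1), (monomial (d j) 1 : MvPolynomial σ K) ∉
      Ideal.span ((fun i => (monomial (d i) 1 : MvPolynomial σ K)) '' {i | i ≠ j})

/-- The ideal generated by the `m+1` monomials with exponent vectors `d i` has a linear
resolution: all generators have the same degree and all the entries of every
Hilbert–Burch matrix of `I` are linear forms (i.e. every Taylor relation occurring as a
row of a Hilbert–Burch matrix is linear). -/
def HasLinearRes (K : Type*) [Field K] {σ : Type*} (m : ℕ)
    (d : Fin (m + 1) → (σ →₀ ℕ)) : Prop :=
  (∃ c, ∀ i, mdeg (d i) = c) ∧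
    ∀ t, IsHB K m d t →
      ∀ k, mdeg (d (t k).1 - d (t k).2) = 1 ∧ mdeg (d (t k).2 - d (t k).1) = 1

/-- A graph is chordal if every cycle of length at least `4` has a chord, i.e. an edge
of the graph joining two vertices of the cycle which is not an edge of the cycle. -/
def IsChordal {V : Type*} (G : SimpleGraph V) : Prop :=
  ∀ ⦃v : V⦄ (w : G.Walk v v), w.IsCycle → 4 ≤ w.length →
    ∃ a b, a ∈ w.support ∧ b ∈ w.support ∧ G.Adj a b ∧ s(a, b) ∉ w.edges

/-- A maximal clique of a graph. -/
def IsMaxClique {V : Type*} (G : SimpleGraph V) (s : Set V) : Prop :=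
  G.IsClique s ∧ ∀ t : Set V, G.IsClique t → s ⊆ t → t = s

/-- `b` is the "path-begin" function of the tree `G`: for `i ≠ j`, `b i j` is the
first vertex after `i` on the unique path in `G` from `i` to `j` (equivalently, the
neighbour of `i` which is one step closer to `j`). -/
def PathBegin {V : Type*} (G : SimpleGraph V) (b : V → V → V) : Prop :=
  ∀ i j : V, i ≠ j → G.Adj i (b i j) ∧ G.dist (b i j) j + 1 = G.dist i j

/-- The index set of the `2m` indeterminates `x_{ij}`: ordered pairs `(i,j)` such that
`{i,j}` is an edge of `G`. -/
abbrev EdgeVar {N : ℕ} (G : SimpleGraph (Fin N)) : Type :=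
  {p : Fin N × Fin N // G.Adj p.1 p.2}

/-- `ε` enumerates the edges of `G` (each unordered edge appearing exactly once). -/
def EdgeEnum {m : ℕ} (G : SimpleGraph (Fin (m + 1)))
    (ε : Fin m → Fin (m + 1) × Fin (m + 1)) : Prop :=
  ∀ i j : Fin (m + 1), G.Adj i j → ∃! k, ε k = (i, j) ∨ ε k = (j, i)

/-- The generic matrix `A(Γ)` attached to the tree `G` with edges enumerated by `ε`:
the `k`-th row, for the `k`-th edge `{i,j}`, has entry `-x_{ij}` in column `i`,
entry `x_{ji}` in column `j` and `0` elsewhere. -/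
def genMat (K : Type*) [Field K] {m : ℕ} (G : SimpleGraph (Fin (m + 1)))
    (ε : Fin m → Fin (m + 1) × Fin (m + 1)) (hε : ∀ k, G.Adj (ε k).1 (ε k).2) :
    Matrix (Fin m) (Fin (m + 1)) (MvPolynomial (EdgeVar G) K) := fun k l =>
  if l = (ε k).1 then -(X ⟨ε k, hε k⟩)
  else if l = (ε k).2 then X ⟨((ε k).2, (ε k).1), (hε k).symm⟩
  else 0

/-- `v_j`: the maximal minor of the generic matrix `A(Γ)` obtained by omitting the
`j`-th column. -/
def genMinor (K : Type*) [Field K] {m : ℕ} (G : SimpleGraph (Fin (m + 1)))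
    (ε : Fin m → Fin (m + 1) × Fin (m + 1)) (hε : ∀ k, G.Adj (ε k).1 (ε k).2)
    (j : Fin (m + 1)) : MvPolynomial (EdgeVar G) K :=
  ((genMat K G ε hε).submatrix id j.succAbove).det

/-- The monomial `∏_{i ≠ j} x_{i, b(i,j)}`. -/
def genV (K : Type*) [Field K] {m : ℕ} (G : SimpleGraph (Fin (m + 1)))
    (b : Fin (m + 1) → Fin (m + 1) → Fin (m + 1))
    (hb : ∀ i j : Fin (m + 1), i ≠ j → G.Adj i (b i j)) (j : Fin (m + 1)) :
    MvPolynomial (EdgeVar G) K :=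
  ∏ i, if h : i = j then 1 else X ⟨(i, b i j), hb i j h⟩

/-- The exponent vector of the monomial `∏_{i ≠ j} x_{i, b(i,j)}`. -/
def genD {m : ℕ} (G : SimpleGraph (Fin (m + 1)))
    (b : Fin (m + 1) → Fin (m + 1) → Fin (m + 1))
    (hb : ∀ i j : Fin (m + 1), i ≠ j → G.Adj i (b i j)) (j : Fin (m + 1)) :
    EdgeVar G →₀ ℕ :=
  ∑ i, if h : i = j then 0 else Finsupp.single ⟨(i, b i j), hb i j h⟩ 1

end

end CMCodim2

theorem my_det_triangular {R : Type*} [CommRing R] {n : Type*} [DecidableEq n] [Fintype n]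
    (N : Matrix n n R) (w : n → ℕ)
    (h : ∀ k l, N k l ≠ 0 → k = l ∨ w l < w k) : N.det = ∏ i, N i i := by
  rw [Matrix.det_apply]
  rw [Finset.sum_eq_single (1 : Equiv.Perm n)]
  · simp
  · intro σ _ hσ
    have hprod : ∏ i, N (σ i) i = 0 := by
      by_contra hne
      have hfac : ∀ i : n, N (σ i) i ≠ 0 := fun i hi =>
        hne (Finset.prod_eq_zero (Finset.mem_univ i) hi)
      have hle : ∀ i, w i ≤ w (σ i) := fun i => by
        rcases h _ _ (hfac i) with he | hlt
        · rw [he]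
        · exact hlt.le
      obtain ⟨i₀, hi₀⟩ : ∃ i, σ i ≠ i := by
        by_contra hc
        push_neg at hc
        exact hσ (Equiv.ext hc)
      have hlt : w i₀ < w (σ i₀) := by
        rcases h _ _ (hfac i₀) with he | hlt
        · exact absurd he hi₀
        · exact hlt
      have h1 : ∑ i, w i < ∑ i, w (σ i) :=
        Finset.sum_lt_sum (fun i _ => hle i) ⟨i₀, Finset.mem_univ i₀, hlt⟩
      rw [Equiv.sum_comp σ w] at h1
      exact lt_irrefl _ h1
    rw [hprod, smul_zero]
  · simp

theorem my_prod_pm {R : Type*} [CommRing R] {α : Type*} (s : Finset α) (f g : α → R)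
    (h : ∀ a ∈ s, f a = g a ∨ f a = -g a) :
    (∏ a ∈ s, f a) = ∏ a ∈ s, g a ∨ (∏ a ∈ s, f a) = -∏ a ∈ s, g a := by
  induction s using Finset.cons_induction with
  | empty => simp
  | cons a s ha ih =>
    rw [Finset.prod_cons, Finset.prod_cons]
    rcases h a (Finset.mem_cons_self a s) with h1 | h1 <;>
      rcases ih (fun b hb => h b (Finset.mem_cons_of_mem hb)) with h2 | h2 <;>
      rw [h1, h2]
    · left; ring
    · right; ring
    · right; ring
    · left; ring

open CMCodim2 MvPolynomial
/-- Let `Γ` be a tree on the vertex set `[m+1]` and `A(Γ)` its generic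
matrix. Then for each `j`, the maximal minor `v_j` of `A(Γ)` obtained by omitting the
`j`-th column equals, up to sign, the monomial `∏_{i ≠ j} x_{i, b(i,j)}`. -/
theorem statement0 (K : Type*) [Field K] {m : ℕ} (G : SimpleGraph (Fin (m + 1)))
    (hG : G.IsTree)
    (ε : Fin m → Fin (m + 1) × Fin (m + 1)) (hε : ∀ k, G.Adj (ε k).1 (ε k).2)
    (henum : EdgeEnum G ε)
    (b : Fin (m + 1) → Fin (m + 1) → Fin (m + 1)) (hb : PathBegin G b) :
    ∀ j : Fin (m + 1),
      genMinor K G ε hε j = genV K G b (fun i j h => (hb i j h).1) j ∨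
      genMinor K G ε hε j = -genV K G b (fun i j h => (hb i j h).1) j := by
  intro j
  classical
  have hine : ∀ l : Fin m, j.succAbove l ≠ j := fun l => Fin.succAbove_ne j l
  have hadj : ∀ l : Fin m, G.Adj (j.succAbove l) (b (j.succAbove l) j) :=
    fun l => (hb _ _ (hine l)).1
  have hdist : ∀ l : Fin m,
      G.dist (b (j.succAbove l) j) j + 1 = G.dist (j.succAbove l) j :=
    fun l => (hb _ _ (hine l)).2
  have key : ∀ l : Fin m, ∃ k, ε k = (j.succAbove l, b (j.succAbove l) j) ∨
      ε k = (b (j.succAbove l) j, j.succAbove l) :=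
    fun l => (henum _ _ (hadj l)).exists
  choose ρ hρ using key
  have hinj : Function.Injective ρ := by
    intro l l' hll
    have h1 := hρ l
    rw [hll] at h1
    have h2 := hρ l'
    have heq : j.succAbove l = j.succAbove l' := by
      rcases h1 with h1 | h1 <;> rcases h2 with h2 | h2 <;> rw [h1] at h2 <;>
        obtain ⟨ha, hb'⟩ := Prod.mk.injEq .. ▸ h2
      · exact ha
      · have d1 := hdist l; have d2 := hdist l'
        rw [hb'] at d1; rw [← ha] at d2
        omega
      · have d1 := hdist l; have d2 := hdist l'
        rw [ha] at d1; rw [← hb'] at d2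
        omega
      · exact hb'
    exact Fin.succAbove_right_injective heq
  let σ : Equiv.Perm (Fin m) := Equiv.ofBijective ρ (Finite.injective_iff_bijective.mp hinj)
  set M : Matrix (Fin m) (Fin m) (MvPolynomial (EdgeVar G) K) :=
    (genMat K G ε hε).submatrix id j.succAbove with hM
  set N : Matrix (Fin m) (Fin m) (MvPolynomial (EdgeVar G) K) :=
    M.submatrix (⇑σ) id with hN
  have hNval : ∀ k l, N k l = genMat K G ε hε (ρ k) (j.succAbove l) := fun _ _ => rfl
  have htri : ∀ k l, N k l ≠ 0 → k = l ∨
      G.dist (j.succAbove l) j < G.dist (j.succAbove k) j := by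
    intro k l hNkl
    rw [hNval] at hNkl
    have hmem : j.succAbove l = (ε (ρ k)).1 ∨ j.succAbove l = (ε (ρ k)).2 := by
      by_contra hc
      push_neg at hc
      apply hNkl
      simp [genMat, hc.1, hc.2]
    have hcases : j.succAbove l = j.succAbove k ∨
        j.succAbove l = b (j.succAbove k) j := by
      rcases hρ k with h | h <;> rw [h] at hmem <;> tauto
    rcases hcases with h | h
    · exact Or.inl (Fin.succAbove_right_injective h).symm
    · right
      rw [h]
      have := hdist k
      omega
  have hdiag : ∀ l, N l l = X (⟨(j.succAbove l, b (j.succAbove l) j), hadj l⟩ : EdgeVar G) ∨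
      N l l = -X (⟨(j.succAbove l, b (j.succAbove l) j), hadj l⟩ : EdgeVar G) := by
    intro l
    rw [hNval]
    rcases hρ l with h | h
    · right
      have h1 : j.succAbove l = (ε (ρ l)).1 := by rw [h]
      have hxe : (⟨ε (ρ l), hε (ρ l)⟩ : EdgeVar G) =
          ⟨(j.succAbove l, b (j.succAbove l) j), hadj l⟩ := Subtype.ext h
      rw [genMat, if_pos h1]
      exact congrArg (fun p => -X p) hxe
    · left
      have h1 : j.succAbove l ≠ (ε (ρ l)).1 := by rw [h]; exact (hadj l).ne
      have h2 : j.succAbove l = (ε (ρ l)).2 := by rw [h]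
      have hxe : (⟨((ε (ρ l)).2, (ε (ρ l)).1), (hε (ρ l)).symm⟩ : EdgeVar G) =
          ⟨(j.succAbove l, b (j.succAbove l) j), hadj l⟩ :=
        Subtype.ext (Prod.ext h2.symm (show (ε (ρ l)).1 = b (j.succAbove l) j by rw [h]))
      rw [genMat, if_neg h1, if_pos h2]
      exact congrArg (fun p => X p) hxe
  have hNdet : N.det = ∏ l, N l l :=
    my_det_triangular N (fun l => G.dist (j.succAbove l) j) htri
  have hperm : N.det = (Equiv.Perm.sign σ : ℤ) * M.det := Matrix.det_permute σ M
  have hP : (∏ l, N l l) =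
        (∏ l : Fin m, X (⟨(j.succAbove l, b (j.succAbove l) j), hadj l⟩ : EdgeVar G)) ∨
      (∏ l, N l l) =
        -(∏ l : Fin m, X (⟨(j.succAbove l, b (j.succAbove l) j), hadj l⟩ : EdgeVar G)) :=
    my_prod_pm Finset.univ _ _ (fun l _ => hdiag l)
  have hV : genV K G b (fun i j h => (hb i j h).1) j =
      ∏ l : Fin m, X (⟨(j.succAbove l, b (j.succAbove l) j), hadj l⟩ : EdgeVar G) := by
    rw [genV, Fin.prod_univ_succAbove
      (fun i => if h : i = j then 1 else X (⟨(i, b i j), (hb i j h).1⟩ : EdgeVar G)) j]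
    rw [dif_pos rfl, one_mul]
    exact Finset.prod_congr rfl fun l _ => by rw [dif_neg (hine l)]
  have hgm : genMinor K G ε hε j = M.det := rfl
  rw [hgm, hV]
  have hMdet : M.det = N.det ∨ M.det = -N.det := by
    rcases Int.units_eq_one_or (Equiv.Perm.sign σ) with hs | hs <;> rw [hs] at hperm
    · left; rw [hperm]; push_cast; ring
    · right; rw [hperm]; push_cast; ring
  rw [hNdet] at hMdet
  rcases hMdet with h | h <;> rcases hP with h' | h' <;> rw [h, h']
  · left; rfl
  · right; rfl
  · right; rfl
  · left; rw [neg_neg]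
end

section
/- Let Γ be a tree on the vertex set [m+1]. Then the generic monomial ideal I(Γ) has the primary decomposition I(Γ) = ⋂_{1 ≤ i < j ≤ m+1} (x_{i,b(i,j)}, x_{j,e(i,j)}), the intersection of the ideals generated by the two indicated variables taken over all pairs of distinct vertices i < j. -/
open MvPolynomial

/-!
Deleting column `j` of `A(Γ)` and matching each vertex `l ≠ j` with the edge leaving `l` towards
`j` makes the minor triangular with respect to the distance to `j`, so
`v_j = ±∏_{l ≠ j} x_{l,b(l,j)}` and `I(Γ)` is a monomial ideal. A monomial lies in `I(Γ)` iff for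
some `k` it is divisible by every `x_{l,b(l,k)}`, and it lies in the intersection iff for all
`i < j` it is divisible by `x_{i,b(i,j)}` or by `x_{j,b(j,i)}`. The first condition implies the
second because every `k` lies on the far side of `i` as seen from `j` or on the far side of `j`
as seen from `i`; the converse follows by choosing a violated first step `(l, b(l,k))` whose
branch towards `k` is as large as possible.
-/

theorem Matrix.det_eq_prod_diag_of_graded {n R : Type*} [Fintype n] [DecidableEq n] [CommRing R]
    (M : Matrix n n R) (f : n → ℕ) (hM : ∀ i j, M i j ≠ 0 → i = j ∨ f j < f i) :
    M.det = ∏ i, M i i := by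
  let g : n → ℕ ×ₗ Fin (Fintype.card n) := fun i => toLex (f i, Fintype.equivFin n i)
  have hg : Function.Injective g := fun i j h =>
    (Fintype.equivFin n).injective (congrArg (fun x => (ofLex x).2) h)
  let : LinearOrder n := LinearOrder.lift' g hg
  refine M.det_of_isLowerTriangular fun i j hij => ?_
  by_contra h
  rcases hM i j h with rfl | hf
  · exact lt_irrefl _ hij
  · exact lt_asymm (show g i < g j from hij) (Prod.Lex.toLex_lt_toLex.mpr (Or.inl hf))

theorem Ideal.span_range_eq_of_associated {ι R : Type*} [CommSemiring R] {f g : ι → R}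
    (h : ∀ i, Associated (f i) (g i)) : Ideal.span (Set.range f) = Ideal.span (Set.range g) := by
  apply le_antisymm <;> rw [Ideal.span_le] <;> rintro _ ⟨i, rfl⟩
  · exact (Ideal.mem_iff_of_associated (h i)).mpr (Ideal.subset_span ⟨i, rfl⟩)
  · exact (Ideal.mem_iff_of_associated (h i)).mp (Ideal.subset_span ⟨i, rfl⟩)

namespace SimpleGraph

variable {V : Type*} {G : SimpleGraph V}

theorem IsAcyclic.eq_of_adj_of_dist_add_one (hG : G.IsAcyclic) {i j c c' : V}
    (hc : G.Adj i c) (hc' : G.Adj i c') (hd : G.dist c j + 1 = G.dist i j)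
    (hd' : G.dist c' j + 1 = G.dist i j) : c = c' := by
  have geodesic_through : ∀ {c}, G.Adj i c → G.dist c j + 1 = G.dist i j →
      ∃ p : G.Path i j, p.1.snd = c := by
    intro c hc hd
    have hij : G.Reachable i j := Reachable.of_dist_ne_zero (by omega)
    obtain ⟨p, hp⟩ := (hc.symm.reachable.trans hij).exists_walk_length_eq_dist
    have hlen : (Walk.cons hc p).length = G.dist i j := by rw [Walk.length_cons, hp, hd]
    exact ⟨⟨_, Walk.isPath_of_length_eq_dist _ hlen⟩, Walk.snd_cons _ _⟩
  obtain ⟨p, rfl⟩ := geodesic_through hc hd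
  obtain ⟨q, rfl⟩ := geodesic_through hc' hd'
  rw [(hG.subsingleton_path i j).elim p q]

end SimpleGraph

namespace CMCodim2

open SimpleGraph

/-- When `b` is a path-begin function of a tree, this is the vertex set of the component of
`G - i` containing `j`. -/
def branch {V : Type*} [Fintype V] [DecidableEq V] (b : V → V → V) (i j : V) : Finset V :=
  {v | v ≠ i ∧ b i v = b i j}

namespace PathBegin

variable {V : Type*} {G : SimpleGraph V} {b : V → V → V}

theorem dist_eq_add_one_of_ne (hb : PathBegin G b) (hG : G.IsTree) {i j c : V} (hij : i ≠ j)
    (hc : G.Adj i c) (hcb : c ≠ b i j) : G.dist c j = G.dist i j + 1 := by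
  rcases hG.dist_eq_dist_add_one_of_adj j hc with h | h
  · rw [dist_comm (u := j), dist_comm (u := j)] at h
    exact absurd (hG.isAcyclic.eq_of_adj_of_dist_add_one hc (hb i j hij).1 h.symm
      (hb i j hij).2) hcb
  · rwa [dist_comm (u := j), dist_comm (u := j)] at h

theorem eq_of_adj_of_dist_add_one (hb : PathBegin G b) (hG : G.IsTree) {i j c : V}
    (hij : i ≠ j) (hc : G.Adj i c) (hd : G.dist c j + 1 = G.dist i j) : b i j = c :=
  hG.isAcyclic.eq_of_adj_of_dist_add_one (hb i j hij).1 hc (hb i j hij).2 hd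

theorem dist_eq_add_of_ne (hb : PathBegin G b) (hG : G.IsTree) {i j k : V} (hij : i ≠ j)
    (hki : k ≠ i) (hbb : b i k ≠ b i j) : G.dist k j = G.dist k i + G.dist i j := by
  induction hn : G.dist i k using Nat.strong_induction_on generalizing i with
  | _ n ih =>
    obtain ⟨hic, hck⟩ := hb i k hki.symm
    have hcj := hb.dist_eq_add_one_of_ne hG hij hic hbb
    have hki' : G.dist k i = n := by rw [dist_comm, hn]
    have hck' : G.dist k (b i k) + 1 = G.dist k i := by rw [dist_comm, hck, dist_comm]
    by_cases hkc : k = b i k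
    · rw [← hkc, dist_self] at hck'
      rw [← hkc] at hcj
      omega
    have hcj' : b i k ≠ j := by rintro rfl; simp at hcj
    have hbcj : b (b i k) j = i := hb.eq_of_adj_of_dist_add_one hG hcj' hic.symm hcj.symm
    have hbck : b (b i k) k ≠ b (b i k) j := by
      rw [hbcj]
      intro h
      have := (hb (b i k) k (Ne.symm hkc)).2
      rw [h] at this
      omega
    have := ih _ (by omega) hcj' hkc hbck rfl
    omega

theorem eq_of_ne (hb : PathBegin G b) (hG : G.IsTree) {i j k : V} (hij : i ≠ j)
    (hki : k ≠ i) (hbb : b i k ≠ b i j) : k ≠ j ∧ b j k = b j i := by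
  have hkj : k ≠ j := by rintro rfl; exact hbb rfl
  refine ⟨hkj, hb.eq_of_adj_of_dist_add_one hG hkj.symm (hb j i hij.symm).1 ?_⟩
  have hbetween := hb.dist_eq_add_of_ne hG hij hki hbb
  obtain ⟨hja, hjd⟩ := hb j i hij.symm
  have h1 : G.dist (b j i) k ≤ G.dist (b j i) i + G.dist i k := hG.connected.dist_triangle
  have h2 : G.dist j k ≤ G.dist j (b j i) + G.dist (b j i) k := hG.connected.dist_triangle
  rw [dist_eq_one_iff_adj.mpr hja] at h2
  rw [dist_comm (u := k) (v := j), dist_comm (u := k) (v := i), dist_comm (u := i) (v := j)]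
    at hbetween
  omega

theorem branch_or (hb : PathBegin G b) (hG : G.IsTree) {i j : V} (hij : i ≠ j) (k : V) :
    (k ≠ i ∧ b i k = b i j) ∨ (k ≠ j ∧ b j k = b j i) := by
  by_cases hki : k = i
  · exact Or.inr ⟨hki ▸ hij, hki ▸ rfl⟩
  by_cases hbb : b i k = b i j
  · exact Or.inl ⟨hki, hbb⟩
  · exact Or.inr (hb.eq_of_ne hG hij hki hbb)

theorem eq_of_sym2_eq (hb : PathBegin G b) {u w j : V} (hu : u ≠ j) (hw : w ≠ j)
    (h : s(u, b u j) = s(w, b w j)) : u = w := by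
  rcases Sym2.eq_iff.mp h with ⟨huw, -⟩ | ⟨huw, hwu⟩
  · exact huw
  · have hu' := (hb u j hu).2
    have hw' := (hb w j hw).2
    rw [hwu] at hu'
    rw [← huw] at hw'
    omega

variable [Fintype V] [DecidableEq V]

theorem branch_ssubset (hb : PathBegin G b) (hG : G.IsTree) {p q l : V}
    (hlp : l ≠ p) (hbl : b p l ≠ b p q) : branch b p q ⊂ branch b l p := by
  refine Finset.ssubset_iff_of_subset (fun v hv => ?_) |>.mpr ⟨p, ?_, ?_⟩
  · simp only [branch, Finset.mem_filter, Finset.mem_univ, true_and] at hv ⊢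
    exact hb.eq_of_ne hG hlp.symm hv.1 (hv.2 ▸ Ne.symm hbl)
  · simp [branch, hlp.symm]
  · simp [branch]

/-- A first step `(l, b l k)` violating `P` whose branch `branch b l k` is largest cannot
exist: another violation `(l', b l' l)` would have a strictly larger branch. -/
theorem exists_forall_of_forall_or (hb : PathBegin G b) (hG : G.IsTree) (P : V → V → Prop)
    (hP : ∀ i j, i ≠ j → P i (b i j) ∨ P j (b j i)) : ∃ k, ∀ l, l ≠ k → P l (b l k) := by
  classical
  by_contra! hbad
  have hne : ({x : V × V | x.1 ≠ x.2 ∧ ¬P x.1 (b x.1 x.2)} : Finset (V × V)).Nonempty := by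
    obtain ⟨k⟩ := hG.nonempty
    obtain ⟨l, hlk, hl⟩ := hbad k
    exact ⟨(l, k), by simp [hlk, hl]⟩
  obtain ⟨⟨p, q⟩, hpq, hmax⟩ := Finset.exists_max_image _ (fun x => (branch b x.1 x.2).card) hne
  simp only [Finset.mem_filter, Finset.mem_univ, true_and] at hpq
  obtain ⟨l, hlp, hl⟩ := hbad p
  by_cases hbl : b p l = b p q
  · rcases hP p l hlp.symm with h | h
    · exact hpq.2 (hbl ▸ h)
    · exact hl h
  · have := Finset.card_lt_card (hb.branch_ssubset hG hlp hbl)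
    have : (branch b l p).card ≤ (branch b p q).card := hmax (l, p) (by simp [hlp, hl])
    omega

theorem exists_forall_iff_forall_or (hb : PathBegin G b) (hG : G.IsTree) (P : V → V → Prop) :
    (∃ k, ∀ l, l ≠ k → P l (b l k)) ↔ ∀ i j, i ≠ j → P i (b i j) ∨ P j (b j i) := by
  refine ⟨fun ⟨k, hk⟩ i j hij => ?_, hb.exists_forall_of_forall_or hG P⟩
  rcases hb.branch_or hG hij k with ⟨hki, hbk⟩ | ⟨hkj, hbk⟩
  · exact Or.inl (hbk ▸ hk i hki.symm)
  · exact Or.inr (hbk ▸ hk j hkj.symm)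

end PathBegin

section Minors

local infix:50 " ~ᵤ " => Associated

variable {K : Type*} [Field K] {m : ℕ} {G : SimpleGraph (Fin (m + 1))}
  {ε : Fin m → Fin (m + 1) × Fin (m + 1)} {hε : ∀ k, G.Adj (ε k).1 (ε k).2}

theorem eq_or_eq_of_genMat_ne_zero {k : Fin m} {l : Fin (m + 1)}
    (h : genMat K G ε hε k l ≠ 0) : l = (ε k).1 ∨ l = (ε k).2 := by
  by_contra! hl
  simp [genMat, hl.1, hl.2] at h

theorem associated_genMat_X {k : Fin m} {u w : Fin (m + 1)} (huw : G.Adj u w)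
    (hk : ε k = (u, w) ∨ ε k = (w, u)) :
    Associated (genMat K G ε hε k u) (X ⟨(u, w), huw⟩) := by
  rcases hk with hk | hk
  · simp only [genMat, hk, if_true]
    exact (Associated.refl _).neg_left
  · simp only [genMat, hk, huw.ne, if_false, if_true]
    rfl

theorem genV_eq_monomial_genD (b : Fin (m + 1) → Fin (m + 1) → Fin (m + 1))
    (hb : ∀ i j : Fin (m + 1), i ≠ j → G.Adj i (b i j)) (j : Fin (m + 1)) :
    genV K G b hb j = monomial (genD G b hb j) 1 := by
  rw [genD, monomial_sum_one, genV]
  refine Finset.prod_congr rfl fun i _ => ?_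
  split_ifs <;> rfl

variable {b : Fin (m + 1) → Fin (m + 1) → Fin (m + 1)}

/-- Ordering the rows so that vertex `l` meets the edge to its parent towards `j`, the minor
becomes triangular with respect to the distance to `j`; its diagonal is `±x_{l, b(l,j)}`. -/
theorem associated_genMinor_genV (henum : EdgeEnum G ε) (hb : PathBegin G b)
    (j : Fin (m + 1)) :
    Associated (genMinor K G ε hε j) (genV K G b (fun i j h => (hb i j h).1) j) := by
  classical
  set v := j.succAbove
  have hvj : ∀ l, v l ≠ j := Fin.succAbove_ne j
  choose τ hτ using fun l => (henum (v l) (b (v l) j) (hb _ j (hvj l)).1).exists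
  have hτinj : Function.Injective τ := fun l l' h => by
    have hs : ∀ l, s((ε (τ l)).1, (ε (τ l)).2) = s(v l, b (v l) j) := fun l => by
      rcases hτ l with e | e <;> simp [e, Sym2.eq_swap]
    exact Fin.succAbove_right_injective
      (hb.eq_of_sym2_eq (hvj l) (hvj l') (by rw [← hs, ← hs, h]))
  set σ := Equiv.ofBijective τ hτinj.bijective_of_finite
  set M := (genMat K G ε hε).submatrix id v
  have hgraded : ∀ l' l, M (σ l') l ≠ 0 → l' = l ∨ G.dist (v l) j < G.dist (v l') j := by
    intro l' l h
    have hl : v l = (ε (τ l')).1 ∨ v l = (ε (τ l')).2 := eq_or_eq_of_genMat_ne_zero h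
    have hparent : v l = v l' ∨ v l = b (v l') j := by
      rcases hτ l' with e | e <;> rw [e] at hl <;> simp only at hl <;> tauto
    rcases hparent with e | e
    · exact Or.inl (Fin.succAbove_right_injective e).symm
    · have := (hb (v l') j (hvj l')).2
      rw [← e] at this
      omega
  calc genMinor K G ε hε j = M.det := rfl
    _ ~ᵤ (M.submatrix σ id).det := by
      rw [Matrix.det_permute]
      exact (associated_unit_mul_left _ _
        ((Equiv.Perm.sign σ).isUnit.map (Int.castRingHom _))).symm
    _ = ∏ l, M (σ l) l :=
      Matrix.det_eq_prod_diag_of_graded _ (fun l => G.dist (v l) j) hgraded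
    _ ~ᵤ ∏ l, X ⟨(v l, b (v l) j), (hb _ j (hvj l)).1⟩ :=
      Associated.prod _ _ _ fun l _ => associated_genMat_X _ (hτ l)
    _ = genV K G b (fun i j h => (hb i j h).1) j := by
      rw [genV, Fin.prod_univ_succAbove _ j, dif_pos rfl, one_mul]
      exact Finset.prod_congr rfl fun l _ => by rw [dif_neg (Fin.succAbove_ne j l)]

end Minors

section MonomialIdeal

variable {m : ℕ} {G : SimpleGraph (Fin (m + 1))} {b : Fin (m + 1) → Fin (m + 1) → Fin (m + 1)}

theorem genD_apply (hb : ∀ i j : Fin (m + 1), i ≠ j → G.Adj i (b i j)) (k : Fin (m + 1))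
    (e : EdgeVar G) : genD G b hb k e = if e.1.1 ≠ k ∧ e.1.2 = b e.1.1 k then 1 else 0 := by
  rw [genD, Finsupp.finsetSum_apply, Finset.sum_eq_single e.1.1 _ (by simp)]
  · by_cases h : e.1.1 = k
    · simp [h]
    · simp [h, Finsupp.single_apply, Subtype.ext_iff, Prod.ext_iff, eq_comm]
  · intro i _ hi
    split_ifs
    · rfl
    · simp [Subtype.ext_iff, Prod.ext_iff, hi]

theorem genD_le_iff (hb : ∀ i j : Fin (m + 1), i ≠ j → G.Adj i (b i j)) (k : Fin (m + 1))
    (a : EdgeVar G →₀ ℕ) :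
    genD G b hb k ≤ a ↔ ∀ l (hl : l ≠ k), a ⟨(l, b l k), hb l k hl⟩ ≠ 0 := by
  refine ⟨fun h l hl => ?_, fun h ⟨⟨l, c⟩, hlc⟩ => ?_⟩
  · have := h ⟨(l, b l k), hb l k hl⟩
    simp only [genD_apply, hl, ne_eq, not_false_eq_true, and_self, if_true] at this
    omega
  · rw [genD_apply]
    dsimp only
    split_ifs with he
    · obtain ⟨hl, rfl⟩ := he
      exact Nat.one_le_iff_ne_zero.mpr (h l hl)
    · exact Nat.zero_le _

theorem exists_genD_le_iff (hG : G.IsTree) (hb : PathBegin G b) (a : EdgeVar G →₀ ℕ) :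
    (∃ k, genD G b (fun i j h => (hb i j h).1) k ≤ a) ↔
      ∀ i j (h : i < j), a ⟨(i, b i j), (hb i j h.ne).1⟩ ≠ 0 ∨
        a ⟨(j, b j i), (hb j i h.ne').1⟩ ≠ 0 := by
  let P : Fin (m + 1) → Fin (m + 1) → Prop := fun u w => ∃ h : G.Adj u w, a ⟨(u, w), h⟩ ≠ 0
  have hP : ∀ l k (hl : l ≠ k), P l (b l k) ↔ a ⟨(l, b l k), (hb l k hl).1⟩ ≠ 0 :=
    fun l k hl => ⟨fun ⟨_, h⟩ => h, fun h => ⟨_, h⟩⟩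
  calc (∃ k, genD G b (fun i j h => (hb i j h).1) k ≤ a)
      ↔ ∃ k, ∀ l, l ≠ k → P l (b l k) := exists_congr fun k =>
        (genD_le_iff _ k a).trans (forall₂_congr fun l hl => (hP l k hl).symm)
    _ ↔ ∀ i j, i ≠ j → P i (b i j) ∨ P j (b j i) := hb.exists_forall_iff_forall_or hG P
    _ ↔ _ := by
      refine ⟨fun h i j hij => (or_congr (hP i j hij.ne) (hP j i hij.ne')).mp (h i j hij.ne),
        fun h i j hij => ?_⟩
      rcases hij.lt_or_gt with hij | hji
      · exact (or_congr (hP i j hij.ne) (hP j i hij.ne')).mpr (h i j hij)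
      · exact (or_congr (hP i j hji.ne') (hP j i hji.ne)).mpr (h j i hji).symm

end MonomialIdeal

end CMCodim2

open CMCodim2 MvPolynomial
/-- Let `Γ` be a tree on the vertex set `[m+1]`. Then the generic
monomial ideal `I(Γ)` has the primary decomposition
`I(Γ) = ⋂_{1 ≤ i < j ≤ m+1} (x_{i,b(i,j)}, x_{j,e(i,j)})` (recall `e(i,j) = b(j,i)`). -/
theorem statement2 (K : Type*) [Field K] {m : ℕ}
    (G : SimpleGraph (Fin (m + 1))) (hG : G.IsTree)
    (ε : Fin m → Fin (m + 1) × Fin (m + 1)) (hε : ∀ k, G.Adj (ε k).1 (ε k).2)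
    (henum : EdgeEnum G ε)
    (b : Fin (m + 1) → Fin (m + 1) → Fin (m + 1)) (hb : PathBegin G b) :
    Ideal.span (Set.range fun j => genMinor K G ε hε j) =
      ⨅ (i : Fin (m + 1)) (j : Fin (m + 1)) (h : i < j),
        Ideal.span {(X ⟨(i, b i j), (hb i j h.ne).1⟩ : MvPolynomial (EdgeVar G) K),
          X ⟨(j, b j i), (hb j i h.ne').1⟩} := by
  have hmonomial : Ideal.span (Set.range fun j => genMinor K G ε hε j) =
      Ideal.span ((fun s => monomial s (1 : K)) ''
        Set.range (genD G b fun i j h => (hb i j h).1)) := by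
    rw [← Set.range_comp]
    refine Ideal.span_range_eq_of_associated fun j => ?_
    rw [Function.comp_apply, ← genV_eq_monomial_genD]
    exact associated_genMinor_genV henum hb j
  ext p
  simp_rw [hmonomial, mem_ideal_span_monomial_image, Ideal.mem_iInf, ← Set.image_pair,
    mem_ideal_span_X_image]
  simp only [Set.exists_range_iff, exists_genD_le_iff hG hb, Set.mem_insert_iff,
    Set.mem_singleton_iff, exists_eq_or_imp, exists_eq_left]
  exact ⟨fun h i j hij a ha => h a ha i j hij, fun h a ha i j hij => h i j hij a ha⟩
end

section
/- Let Γ be a tree on the vertex set [m+1] such that {m, m+1} is a leaf of Γ with m+1 a free vertex (a vertex belonging to exactly one edge), and let Γ' be the tree on [m] obtained from Γ by removing the edge {m, m+1}. Order the edges so that {m, m+1} is last. If v_1,...,v_{m+1} are the maximal minors of A(Γ) and v_1',...,v_m' are the maximal minors of A(Γ'), then v_j = ± x_{m+1,m}·v_j' for j = 1,...,m, and v_{m+1} = ± x_{m,m+1}·v_m'. -/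
open MvPolynomial

open CMCodim2 MvPolynomial

/-!
The row of `A(Γ)` belonging to the leaf `{a, z}` is the only one with a nonzero entry in the
column of the free vertex `z`, and deleting this row and column leaves `A(Γ')`. So a minor
`v_j` with `j ≠ z` is expanded along column `z`, while in `v_z` the leaf row has its only entry
`-x_{a,z}` in the corner (as `a` is the last remaining column) and is expanded along that row.
-/

namespace Matrix

variable {R : Type*} [CommRing R] {n : ℕ}

theorem det_eq_mul_det_of_last_column_eq_zero (M : Matrix (Fin (n + 1)) (Fin (n + 1)) R)
    (h : ∀ i : Fin n, M i.castSucc (Fin.last n) = 0) :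
    M.det = M (Fin.last n) (Fin.last n) * (M.submatrix Fin.castSucc Fin.castSucc).det := by
  rw [det_succ_column M (Fin.last n), Finset.sum_eq_single_of_mem (Fin.last n) (by simp)]
  · rw [Fin.succAbove_last, Fin.val_last, Even.neg_one_pow ⟨n, rfl⟩, one_mul]
  · intro i _ hi
    obtain ⟨k, rfl⟩ := Fin.exists_castSucc_eq.mpr hi
    rw [h k, mul_zero, zero_mul]

theorem det_eq_mul_det_of_last_row_eq_zero (M : Matrix (Fin (n + 1)) (Fin (n + 1)) R)
    (h : ∀ j : Fin n, M (Fin.last n) j.castSucc = 0) :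
    M.det = M (Fin.last n) (Fin.last n) * (M.submatrix Fin.castSucc Fin.castSucc).det := by
  rw [← det_transpose, det_eq_mul_det_of_last_column_eq_zero Mᵀ h, transpose_apply,
    ← transpose_submatrix, det_transpose]

end Matrix

namespace CMCodim2

variable {K : Type*} [Field K] {m : ℕ}
  {G : SimpleGraph (Fin (m + 2))} {ε : Fin (m + 1) → Fin (m + 2) × Fin (m + 2)}
  {hε : ∀ k, G.Adj (ε k).1 (ε k).2}
  {G' : SimpleGraph (Fin (m + 1))} {ε' : Fin m → Fin (m + 1) × Fin (m + 1)}
  {hε' : ∀ k, G'.Adj (ε' k).1 (ε' k).2}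

theorem genMat_last_last {a : Fin (m + 2)} (hlast : ε (Fin.last m) = (a, Fin.last (m + 1)))
    (haz : G.Adj a (Fin.last (m + 1))) :
    genMat K G ε hε (Fin.last m) (Fin.last (m + 1)) = X ⟨(Fin.last (m + 1), a), haz.symm⟩ := by
  simp [genMat, hlast, (G.ne_of_adj haz).symm]

def EdgeVar.castSucc (hG' : ∀ i j : Fin (m + 1), G'.Adj i j ↔ G.Adj i.castSucc j.castSucc)
    (p : EdgeVar G') : EdgeVar G :=
  ⟨(p.1.1.castSucc, p.1.2.castSucc), (hG' p.1.1 p.1.2).mp p.2⟩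

variable (hG' : ∀ i j : Fin (m + 1), G'.Adj i j ↔ G.Adj i.castSucc j.castSucc)
  (hcomp : ∀ k : Fin m, ε k.castSucc = ((ε' k).1.castSucc, (ε' k).2.castSucc))
include hcomp

theorem genMat_submatrix_castSucc :
    (genMat K G ε hε).submatrix Fin.castSucc Fin.castSucc =
      (genMat K G' ε' hε').map (rename (EdgeVar.castSucc hG')) := by
  ext k l
  simp only [Matrix.submatrix_apply, Matrix.map_apply, genMat, hcomp k, Fin.castSucc_inj]
  split_ifs <;> simp [EdgeVar.castSucc]

theorem genMat_castSucc_last (k : Fin m) :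
    genMat K G ε hε k.castSucc (Fin.last (m + 1)) = 0 := by
  simp [genMat, hcomp k, (Fin.castSucc_lt_last _).ne']

theorem genMinor_castSucc {a : Fin (m + 2)} (hlast : ε (Fin.last m) = (a, Fin.last (m + 1)))
    (haz : G.Adj a (Fin.last (m + 1))) (j : Fin (m + 1)) :
    genMinor K G ε hε j.castSucc =
      X ⟨(Fin.last (m + 1), a), haz.symm⟩ *
        rename (EdgeVar.castSucc hG') (genMinor K G' ε' hε' j) := by
  have hz : j.castSucc.succAbove (Fin.last m) = Fin.last (m + 1) :=
    Fin.succAbove_ne_last_last (Fin.castSucc_lt_last j).ne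
  have hblock : ((genMat K G ε hε).submatrix id j.castSucc.succAbove).submatrix
      Fin.castSucc Fin.castSucc =
      ((genMat K G' ε' hε').submatrix id j.succAbove).map (rename (EdgeVar.castSucc hG')) := by
    refine Matrix.ext fun k l => ?_
    simp only [Matrix.submatrix_apply, Matrix.map_apply, id, Fin.castSucc_succAbove_castSucc]
    exact congrFun₂ (genMat_submatrix_castSucc hG' hcomp) k (j.succAbove l)
  rw [genMinor, Matrix.det_eq_mul_det_of_last_column_eq_zero _ fun k => by
      simpa [hz] using genMat_castSucc_last (K := K) hcomp k,
    Matrix.submatrix_apply, hz, id, genMat_last_last hlast haz, hblock, genMinor,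
    ← AlgHom.mapMatrix_apply, ← AlgHom.map_det]

theorem genMinor_last {a : Fin (m + 2)} (ha : a = (Fin.last m).castSucc)
    (hlast : ε (Fin.last m) = (a, Fin.last (m + 1))) (haz : G.Adj a (Fin.last (m + 1))) :
    genMinor K G ε hε (Fin.last (m + 1)) =
      -(X ⟨(a, Fin.last (m + 1)), haz⟩ *
        rename (EdgeVar.castSucc hG') (genMinor K G' ε' hε' (Fin.last m))) := by
  subst ha
  have hblock : ((genMat K G ε hε).submatrix id Fin.castSucc).submatrix Fin.castSucc
      Fin.castSucc =
      ((genMat K G' ε' hε').submatrix id Fin.castSucc).map (rename (EdgeVar.castSucc hG')) :=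
    Matrix.ext fun k l => congrFun₂ (genMat_submatrix_castSucc hG' hcomp) k l.castSucc
  rw [genMinor, Fin.succAbove_last, Matrix.det_eq_mul_det_of_last_row_eq_zero _ fun l => by
      simp [genMat, hlast, (Fin.castSucc_lt_last l).ne], hblock, genMinor, Fin.succAbove_last,
    ← AlgHom.mapMatrix_apply, ← AlgHom.map_det]
  simp [genMat, hlast]

end CMCodim2

theorem statement6_general (K : Type*) [Field K] {m : ℕ}
    (G : SimpleGraph (Fin (m + 2)))
    (ε : Fin (m + 1) → Fin (m + 2) × Fin (m + 2)) (hε : ∀ k, G.Adj (ε k).1 (ε k).2)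
    (a : Fin (m + 2)) (ha : a = Fin.castSucc (Fin.last m))
    (hlast : ε (Fin.last m) = (a, Fin.last (m + 1)))
    (haz : G.Adj a (Fin.last (m + 1)))
    (G' : SimpleGraph (Fin (m + 1)))
    (hG' : ∀ i j : Fin (m + 1), G'.Adj i j ↔ G.Adj i.castSucc j.castSucc)
    (ε' : Fin m → Fin (m + 1) × Fin (m + 1)) (hε' : ∀ k, G'.Adj (ε' k).1 (ε' k).2)
    (hcomp : ∀ k : Fin m, ε k.castSucc = ((ε' k).1.castSucc, (ε' k).2.castSucc)) :
    (∀ j : Fin (m + 1),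
      genMinor K G ε hε j.castSucc =
          X (⟨(Fin.last (m + 1), a), haz.symm⟩ : EdgeVar G) *
            MvPolynomial.rename (fun p : EdgeVar G' =>
              (⟨(p.1.1.castSucc, p.1.2.castSucc), (hG' p.1.1 p.1.2).mp p.2⟩ : EdgeVar G))
              (genMinor K G' ε' hε' j) ∨
      genMinor K G ε hε j.castSucc =
          -(X (⟨(Fin.last (m + 1), a), haz.symm⟩ : EdgeVar G) *
            MvPolynomial.rename (fun p : EdgeVar G' =>
              (⟨(p.1.1.castSucc, p.1.2.castSucc), (hG' p.1.1 p.1.2).mp p.2⟩ : EdgeVar G))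
              (genMinor K G' ε' hε' j))) ∧
    (genMinor K G ε hε (Fin.last (m + 1)) =
        X (⟨(a, Fin.last (m + 1)), haz⟩ : EdgeVar G) *
          MvPolynomial.rename (fun p : EdgeVar G' =>
            (⟨(p.1.1.castSucc, p.1.2.castSucc), (hG' p.1.1 p.1.2).mp p.2⟩ : EdgeVar G))
            (genMinor K G' ε' hε' (Fin.last m)) ∨
      genMinor K G ε hε (Fin.last (m + 1)) =
        -(X (⟨(a, Fin.last (m + 1)), haz⟩ : EdgeVar G) *
          MvPolynomial.rename (fun p : EdgeVar G' =>
            (⟨(p.1.1.castSucc, p.1.2.castSucc), (hG' p.1.1 p.1.2).mp p.2⟩ : EdgeVar G))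
            (genMinor K G' ε' hε' (Fin.last m)))) :=
  ⟨fun j => Or.inl (genMinor_castSucc hG' hcomp hlast haz j),
    Or.inr (genMinor_last hG' hcomp ha hlast haz)⟩

/-- Let `Γ` be a tree on the vertex set `[m+2]` (playing the role of
`[m+1]`, `m ≥ 1`, of the paper) such that the edge `{a, z}` joining its two last
vertices `a` and `z` is a leaf with `z` a free vertex, and let `Γ'` be the tree on the
first `m+1` vertices obtained by removing this leaf. Order the edges so that the leaf
is last. If `v_1,...,v_{m+2}` are the maximal minors of `A(Γ)` and `v'_1,...,v'_{m+1}`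
are those of `A(Γ')`, then `v_j = ± x_{z,a} · v'_j` for all `j ≤ m+1` and
`v_{m+2} = ± x_{a,z} · v'_{m+1}`. -/
theorem statement6 (K : Type*) [Field K] {m : ℕ}
    (G : SimpleGraph (Fin (m + 2))) (hG : G.IsTree)
    (ε : Fin (m + 1) → Fin (m + 2) × Fin (m + 2)) (hε : ∀ k, G.Adj (ε k).1 (ε k).2)
    (henum : EdgeEnum G ε)
    (a : Fin (m + 2)) (ha : a = Fin.castSucc (Fin.last m))
    (hlast : ε (Fin.last m) = (a, Fin.last (m + 1)))
    (hfree : ∀ i, G.Adj i (Fin.last (m + 1)) → i = a)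
    (haz : G.Adj a (Fin.last (m + 1)))
    (G' : SimpleGraph (Fin (m + 1)))
    (hG' : ∀ i j : Fin (m + 1), G'.Adj i j ↔ G.Adj i.castSucc j.castSucc)
    (hG'tree : G'.IsTree)
    (ε' : Fin m → Fin (m + 1) × Fin (m + 1)) (hε' : ∀ k, G'.Adj (ε' k).1 (ε' k).2)
    (henum' : EdgeEnum G' ε')
    (hcomp : ∀ k : Fin m, ε k.castSucc = ((ε' k).1.castSucc, (ε' k).2.castSucc)) :
    (∀ j : Fin (m + 1),
      genMinor K G ε hε j.castSucc =
          X (⟨(Fin.last (m + 1), a), haz.symm⟩ : EdgeVar G) *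
            MvPolynomial.rename (fun p : EdgeVar G' =>
              (⟨(p.1.1.castSucc, p.1.2.castSucc), (hG' p.1.1 p.1.2).mp p.2⟩ : EdgeVar G))
              (genMinor K G' ε' hε' j) ∨
      genMinor K G ε hε j.castSucc =
          -(X (⟨(Fin.last (m + 1), a), haz.symm⟩ : EdgeVar G) *
            MvPolynomial.rename (fun p : EdgeVar G' =>
              (⟨(p.1.1.castSucc, p.1.2.castSucc), (hG' p.1.1 p.1.2).mp p.2⟩ : EdgeVar G))
              (genMinor K G' ε' hε' j))) ∧
    (genMinor K G ε hε (Fin.last (m + 1)) =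
        X (⟨(a, Fin.last (m + 1)), haz⟩ : EdgeVar G) *
          MvPolynomial.rename (fun p : EdgeVar G' =>
            (⟨(p.1.1.castSucc, p.1.2.castSucc), (hG' p.1.1 p.1.2).mp p.2⟩ : EdgeVar G))
            (genMinor K G' ε' hε' (Fin.last m)) ∨
      genMinor K G ε hε (Fin.last (m + 1)) =
        -(X (⟨(a, Fin.last (m + 1)), haz⟩ : EdgeVar G) *
          MvPolynomial.rename (fun p : EdgeVar G' =>
            (⟨(p.1.1.castSucc, p.1.2.castSucc), (hG' p.1.1 p.1.2).mp p.2⟩ : EdgeVar G))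
            (genMinor K G' ε' hε' (Fin.last m)))) :=
  statement6_general K G ε hε a ha hlast haz G' hG' ε' hε' hcomp
end

section
/- Let I ⊂ S be a Cohen–Macaulay monomial ideal of codimension 2 minimally generated by m+1 monomials u_1,...,u_{m+1}. Then a minimal generating set of the first syzygy module U can be chosen among the Taylor relations, i.e., I admits a Hilbert–Burch matrix A whose rows are Taylor relations; moreover, the graph on [m+1] with an edge {i,j} whenever some row of A has its nonzero entries in columns i and j is a tree on m+1 vertices. -/
open MvPolynomial

/-!
Taylor relations generate the syzygy module `U = ker φ₁`: `U` is multigraded (with `e_l` of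
multidegree `d l`), and a syzygy of multidegree `E` is `∑ c_l x^(E - d l) e_l` with `∑ c_l = 0`,
i.e. `∑_l c_l x^(E - lcm(u_{i₀}, u_l)) r_{i₀ l}`. Pick a set of Taylor relations that is minimal
among those generating `U`. Taking the component of multidegree `lcm(u_i, u_j)` of a relation
among them shows that all its coefficients lie in `𝔪 = (x_1, …, x_n)`, or else `r_{ij}` would be
redundant. The length-2 resolution makes `U` projective, so the surjection `S^T → U` splits and
its kernel `Z` satisfies `Z = 𝔪 Z`; by Nakayama `Z = 0`. Thus the chosen relations are linearly
independent in `U`, which has rank `m`, so there are at most `m` of them.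

The graph of a Hilbert–Burch matrix is connected, since otherwise `φ₁` restricted to one
component kills every row but not the Taylor relation of two vertices in different components;
with at most `m` edges on `m + 1` vertices it is a tree.
-/

open LinearMap

section General

variable {R : Type*} [CommRing R]

theorem Module.Projective.ker_of_range_eq_range {P Q F M : Type*}
    [AddCommGroup P] [Module R P] [Module.Projective R P]
    [AddCommGroup Q] [Module R Q] [Module.Projective R Q]
    [AddCommGroup F] [Module R F] [Module.Projective R F]
    [AddCommGroup M] [Module R M]
    (f : F →ₗ[R] Q) (g : Q →ₗ[R] M) (φ : P →ₗ[R] M) (hf : Function.Injective f)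
    (hfg : range f = ker g) (hgφ : range g = range φ) :
    Module.Projective R (ker φ) := by
  obtain ⟨α, hα⟩ := Module.projective_lifting_property g.rangeRestrict
    (φ.codRestrict _ fun x => hgφ ▸ mem_range_self φ x) g.surjective_rangeRestrict
  obtain ⟨β, hβ⟩ := Module.projective_lifting_property φ.rangeRestrict
    (g.codRestrict _ fun y => hgφ ▸ mem_range_self g y) φ.surjective_rangeRestrict
  have hgα (x : P) : g (α x) = φ x := congrArg Subtype.val (LinearMap.congr_fun hα x)
  have hφβ (y : Q) : φ (β y) = g y := congrArg Subtype.val (LinearMap.congr_fun hβ y)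
  -- `y ↦ (y, f⁻¹ (α y))` and `(x, w) ↦ x - β (α x) + β (f w)` exhibit `ker φ` as a retract
  -- of `P × F`
  let lift : ker φ →ₗ[R] F := (LinearEquiv.ofInjective f hf).symm.toLinearMap ∘ₗ
    α.restrict fun x hx => by rw [hfg, mem_ker, hgα]; exact hx
  have hf_lift (y : ker φ) : f (lift y) = α y :=
    congrArg Subtype.val ((LinearEquiv.ofInjective f hf).apply_symm_apply _)
  let ρ : P × F →ₗ[R] ker φ := LinearMap.codRestrict (ker φ)
    (fst R P F - β ∘ₗ α ∘ₗ fst R P F + β ∘ₗ f ∘ₗ snd R P F) fun p => by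
      have : g (f p.2) = 0 := by rw [← mem_ker, ← hfg]; exact mem_range_self f _
      simp [hφβ, hgα, this]
  refine .of_split ((ker φ).subtype.prod lift) ρ (LinearMap.ext fun y => Subtype.ext ?_)
  change (y : P) - β (α y) + β (f (lift y)) = y
  rw [hf_lift, sub_add_cancel]

theorem LinearMap.ker_eq_bot_of_projective_range [IsDomain R] {ι M : Type*} [Fintype ι]
    [AddCommGroup M] [Module R M] (σ : (ι → R) →ₗ[R] M) [Module.Projective R (range σ)]
    {𝔪 : Ideal R} (h𝔪 : 𝔪 ≠ ⊤) (hker : ∀ z ∈ ker σ, ∀ k, z k ∈ 𝔪) : ker σ = ⊥ := by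
  classical
  obtain ⟨s, hs⟩ := Module.projective_lifting_property σ.rangeRestrict LinearMap.id
    σ.surjective_rangeRestrict
  -- `p` is a projection onto `ker σ`, so `ker σ` is finitely generated and `ker σ = 𝔪 • ker σ`
  set p := LinearMap.id - s ∘ₗ σ.rangeRestrict
  have hσs (y : range σ) : σ (s y) = y := congrArg Subtype.val (LinearMap.congr_fun hs y)
  have hp_mem (u : ι → R) : p u ∈ ker σ := by
    simp [p, hσs]
  have hp_fix (z) (hz : z ∈ ker σ) : p z = z := by
    rw [← σ.ker_rangeRestrict, mem_ker] at hz
    simp [p, hz]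
  have hfg : (ker σ).FG := by
    have : ker σ = Submodule.map p ⊤ := le_antisymm
      (fun z hz => ⟨z, trivial, hp_fix z hz⟩) (by rintro _ ⟨u, -, rfl⟩; exact hp_mem u)
    exact this ▸ (Module.Finite.fg_top).map p
  have hle : ker σ ≤ 𝔪 • ker σ := by
    intro z hz
    rw [← hp_fix z hz, ← Finset.univ_sum_single z, map_sum]
    refine Submodule.sum_mem _ fun k _ => ?_
    rw [← mul_one (z k), ← smul_eq_mul, Pi.single_smul', map_smul]
    exact Submodule.smul_mem_smul (hker z hz k) (hp_mem _)
  obtain ⟨r, hr1, hr⟩ :=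
    Submodule.exists_sub_one_mem_and_smul_eq_zero_of_fg_of_le_smul 𝔪 _ hfg hle
  have hr0 : r ≠ 0 := by
    rintro rfl
    exact h𝔪 ((Ideal.eq_top_iff_one _).mpr (by simpa using 𝔪.neg_mem hr1))
  exact eq_bot_iff.mpr fun z hz => (smul_eq_zero.mp (hr z hz)).resolve_left hr0

theorem LinearIndependent.card_lt_finrank_of_map_eq_zero [IsDomain R] {ι M N : Type*} [Fintype ι]
    [AddCommGroup M] [Module R M] [Module.Finite R M] [Module.IsTorsionFree R M]
    [AddCommGroup N] [Module R N] [Module.IsTorsionFree R N]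
    {v : ι → M} (hv : LinearIndependent R v) (ψ : M →ₗ[R] N) (hψv : ∀ i, ψ (v i) = 0)
    {x : M} (hx : ψ x ≠ 0) : Fintype.card ι < Module.finrank R M := by
  have hx0 : x ≠ 0 := fun h => hx (h ▸ map_zero ψ)
  have hdisj : Disjoint (Submodule.span R (Set.range v))
      (Submodule.span R (Set.range fun _ : Unit => x)) := by
    rw [Set.range_const, Submodule.disjoint_def]
    intro y hy hy'
    obtain ⟨c, rfl⟩ := Submodule.mem_span_singleton.mp hy'
    have : c • ψ x = 0 := by
      rw [← map_smul]
      exact (Submodule.span_le.mpr (by rintro _ ⟨i, rfl⟩; exact hψv i) : _ ≤ ker ψ) hy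
    simp [(smul_eq_zero.mp this).resolve_right hx]
  simpa using (hv.sum_type (linearIndependent_unique_iff.mpr hx0) hdisj).fintype_card_le_finrank

end General

theorem Finsupp.tsub_add_eq_sup {σ : Type*} (a b : σ →₀ ℕ) : a - b + b = a ⊔ b := by
  ext s; simp only [Finsupp.add_apply, Finsupp.tsub_apply, Finsupp.sup_apply]; omega

theorem Finsupp.tsub_sup_add_tsub {σ : Type*} {a b E : σ →₀ ℕ} (ha : a ≤ E) (hb : b ≤ E) :
    E - a ⊔ b + (a - b) = E - b := by
  ext s
  have := ha s; have := hb s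
  simp only [Finsupp.add_apply, Finsupp.tsub_apply, Finsupp.sup_apply]; omega

namespace CMCodim2

section Taylor

variable {K : Type*} [Field K] {σ : Type*} {m : ℕ} (d : Fin (m + 1) → (σ →₀ ℕ))

theorem taylorRel_eq_single_sub_single {i j : Fin (m + 1)} (hij : i ≠ j) :
    taylorRel K m d i j =
      Pi.single j (monomial (d i - d j) 1) - Pi.single i (monomial (d j - d i) 1) := by
  funext k
  by_cases hkj : k = j
  · subst hkj; simp [taylorRel, Ne.symm hij]
  · by_cases hki : k = i
    · subst hki; simp [taylorRel, hij]
    · simp [taylorRel, hki, hkj]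

theorem phi_eq_linearCombination :
    phi K m d = Fintype.linearCombination _ fun i => monomial (d i) 1 := by
  ext v
  simp [phi, Fintype.linearCombination_apply]

theorem linearCombination_taylorRel (w : Fin (m + 1) → MvPolynomial σ K) {i j : Fin (m + 1)}
    (hij : i ≠ j) :
    Fintype.linearCombination _ w (taylorRel K m d i j) =
      monomial (d i - d j) 1 * w j - monomial (d j - d i) 1 * w i := by
  simp [taylorRel_eq_single_sub_single d hij, Fintype.linearCombination_apply_single]

theorem monomial_tsub_mul_monomial (a b : σ →₀ ℕ) :
    (monomial (a - b) 1 * monomial b 1 : MvPolynomial σ K) = monomial (a ⊔ b) 1 := by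
  rw [monomial_mul, Finsupp.tsub_add_eq_sup, mul_one]

theorem phi_taylorRel {i j : Fin (m + 1)} (hij : i ≠ j) :
    phi K m d (taylorRel K m d i j) = 0 := by
  rw [phi_eq_linearCombination, linearCombination_taylorRel d _ hij, monomial_tsub_mul_monomial,
    monomial_tsub_mul_monomial, sup_comm, sub_self]

theorem range_phi :
    range (phi K m d) = Ideal.span (Set.range fun i => (monomial (d i) 1 : MvPolynomial σ K)) := by
  rw [phi_eq_linearCombination, Fintype.range_linearCombination]

theorem monomial_smul_taylorRel {i j : Fin (m + 1)} (hij : i ≠ j) {E : σ →₀ ℕ} (hi : d i ≤ E)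
    (hj : d j ≤ E) (a : K) :
    monomial (E - d i ⊔ d j) a • taylorRel K m d i j =
      Pi.single j (monomial (E - d j) a) - Pi.single i (monomial (E - d i) a) := by
  rw [taylorRel_eq_single_sub_single d hij, smul_sub, ← Pi.single_smul', ← Pi.single_smul',
    smul_eq_mul, smul_eq_mul, monomial_mul, monomial_mul, mul_one,
    Finsupp.tsub_sup_add_tsub hi hj, sup_comm, Finsupp.tsub_sup_add_tsub hj hi]

/-- The multidegree-`E` part of `v ∈ S^{m+1}`, for the multigrading in which `e_l` has
multidegree `d l`. -/
noncomputable def degComp (E : σ →₀ ℕ) :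
    (Fin (m + 1) → MvPolynomial σ K) →+ (Fin (m + 1) → MvPolynomial σ K) where
  toFun v l := monomial (E - d l) (coeff E (v l * monomial (d l) 1))
  map_zero' := by funext l; simp
  map_add' v w := by funext l; simp [add_mul]

theorem degComp_single (E : σ →₀ ℕ) (l : Fin (m + 1)) (p : MvPolynomial σ K) :
    degComp d E (Pi.single l p) =
      Pi.single l (monomial (E - d l) (coeff E (p * monomial (d l) 1))) := by
  funext k
  by_cases hk : k = l
  · subst hk; simp [degComp]
  · simp [degComp, hk]

theorem degComp_smul_taylorRel (E : σ →₀ ℕ) (q : MvPolynomial σ K) {i j : Fin (m + 1)}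
    (hij : i ≠ j) :
    degComp d E (q • taylorRel K m d i j) =
      monomial (E - d i ⊔ d j) (coeff E (q * monomial (d i ⊔ d j) 1)) •
        taylorRel K m d i j := by
  rw [taylorRel_eq_single_sub_single d hij, smul_sub, map_sub, ← Pi.single_smul', ← Pi.single_smul',
    degComp_single, degComp_single, smul_eq_mul, smul_eq_mul, mul_assoc, mul_assoc,
    monomial_mul, monomial_mul, mul_one, Finsupp.tsub_add_eq_sup,
    Finsupp.tsub_add_eq_sup, sup_comm (d j), ← taylorRel_eq_single_sub_single d hij]
  by_cases hE : d i ⊔ d j ≤ E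
  · rw [monomial_smul_taylorRel d hij (le_sup_left.trans hE) (le_sup_right.trans hE)]
  · rw [coeff_mul_monomial', if_neg hE]
    simp

theorem exists_sum_degComp (v : Fin (m + 1) → MvPolynomial σ K) :
    ∃ s : Finset (σ →₀ ℕ), ∑ E ∈ s, degComp d E v = v := by
  classical
  refine ⟨Finset.univ.biUnion fun l => (v l).support.image (· + d l), funext fun l => ?_⟩
  have hsub : (v l).support.image (· + d l) ⊆
      Finset.univ.biUnion fun l => (v l).support.image (· + d l) :=
    Finset.subset_biUnion_of_mem (fun l => (v l).support.image (· + d l)) (Finset.mem_univ l)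
  rw [Finset.sum_apply, ← Finset.sum_subset hsub,
    Finset.sum_image fun _ _ _ _ => add_right_cancel]
  · conv_rhs => rw [← support_sum_monomial_coeff (v l)]
    refine Finset.sum_congr rfl fun a _ => ?_
    simp [degComp, coeff_mul_monomial]
  · intro E _ hE
    simp only [degComp, AddMonoidHom.coe_mk, ZeroHom.coe_mk, coeff_mul_monomial']
    split_ifs with h
    · have : E - d l ∉ (v l).support := fun ha =>
        hE (Finset.mem_image.mpr ⟨_, ha, tsub_add_cancel_of_le h⟩)
      simp [notMem_support_iff.mp this]
    · simp

theorem degComp_mem_span {v : Fin (m + 1) → MvPolynomial σ K} (hv : phi K m d v = 0)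
    (E : σ →₀ ℕ) :
    degComp d E v ∈ Submodule.span (MvPolynomial σ K)
      (Function.uncurry (taylorRel K m d) '' {p | p.1 ≠ p.2}) := by
  classical
  set c : Fin (m + 1) → K := fun l => coeff E (v l * monomial (d l) 1)
  have hc_sum : ∑ l, c l = 0 := by
    simpa [phi, coeff_sum] using congrArg (coeff E) hv
  have hc_le (l) (hl : c l ≠ 0) : d l ≤ E := by
    by_contra h
    exact hl (by simp [c, coeff_mul_monomial', h])
  have hdeg : degComp d E v = ∑ l, Pi.single l (monomial (E - d l) (c l)) :=
    (Finset.univ_sum_single _).symm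
  by_cases hz : ∀ l, c l = 0
  · simp [hdeg, hz]
  push Not at hz
  obtain ⟨i₀, hi₀⟩ := hz
  -- since `∑ c = 0`, we may subtract `c l • x^(E - d i₀) e_{i₀}` from each summand
  have htel : degComp d E v = ∑ l, (Pi.single l (monomial (E - d l) (c l)) -
      Pi.single i₀ (monomial (E - d i₀) (c l))) := by
    rw [Finset.sum_sub_distrib, ← hdeg, eq_comm, sub_eq_self]
    funext k
    by_cases hk : k = i₀ <;> simp [Finset.sum_apply, hk, ← map_sum, hc_sum]
  rw [htel]
  refine Submodule.sum_mem _ fun l _ => ?_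
  by_cases hl : l = i₀
  · simp [hl]
  by_cases hcl : c l = 0
  · simp [hcl]
  rw [← monomial_smul_taylorRel d (Ne.symm hl) (hc_le i₀ hi₀) (hc_le l hcl)]
  exact Submodule.smul_mem _ _ (Submodule.subset_span ⟨(i₀, l), Ne.symm hl, rfl⟩)

theorem span_taylorRel_eq_ker_phi :
    Submodule.span (MvPolynomial σ K) (Function.uncurry (taylorRel K m d) '' {p | p.1 ≠ p.2}) =
      ker (phi K m d) := by
  refine le_antisymm (Submodule.span_le.mpr ?_) fun v hv => ?_
  · rintro _ ⟨⟨i, j⟩, hij, rfl⟩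
    exact phi_taylorRel d hij
  · obtain ⟨s, hs⟩ := exists_sum_degComp d v
    rw [← hs]
    exact Submodule.sum_mem _ fun E _ => degComp_mem_span d hv E

theorem taylorRel_mem_span_of_constantCoeff_ne_zero {ι : Type*} [Fintype ι]
    {e : ι → Fin (m + 1) × Fin (m + 1)} (he : ∀ k, (e k).1 ≠ (e k).2)
    {q : ι → MvPolynomial σ K} (hq : ∑ k, q k • Function.uncurry (taylorRel K m d) (e k) = 0)
    {k₀ : ι} (hk₀ : constantCoeff (q k₀) ≠ 0) :
    Function.uncurry (taylorRel K m d) (e k₀) ∈ Submodule.span (MvPolynomial σ K)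
      (Function.uncurry (taylorRel K m d) ∘ e '' {k | k ≠ k₀}) := by
  classical
  set r := Function.uncurry (taylorRel K m d)
  -- take the component of the relation in the multidegree `lcm(u_i, u_j)` of `r_{e k₀}`
  set E := d (e k₀).1 ⊔ d (e k₀).2
  set c : ι → K := fun k => coeff E (q k * monomial (d (e k).1 ⊔ d (e k).2) 1)
  have hcomp_term (k) : degComp d E (q k • r (e k)) =
      monomial (E - d (e k).1 ⊔ d (e k).2) (c k) • r (e k) :=
    degComp_smul_taylorRel d E (q k) (he k)
  have hcomp := congrArg (degComp d E) hq
  simp only [map_sum, map_zero, hcomp_term] at hcomp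
  rw [← Finset.add_sum_erase _ _ (Finset.mem_univ k₀), tsub_self, monomial_zero',
    add_eq_zero_iff_eq_neg] at hcomp
  have hc₀ : c k₀ = constantCoeff (q k₀) := by
    simp [c, E, coeff_mul_monomial', constantCoeff_eq]
  have hC : (C (c k₀)⁻¹ * C (c k₀) : MvPolynomial σ K) = 1 := by
    rw [← C_mul, inv_mul_cancel₀ (hc₀ ▸ hk₀), C_1]
  rw [← one_smul (MvPolynomial σ K) (r (e k₀)), ← hC, mul_smul, hcomp]
  refine Submodule.smul_mem _ _ (Submodule.neg_mem _ (Submodule.sum_mem _ fun k hk => ?_))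
  exact Submodule.smul_mem _ _ (Submodule.subset_span ⟨k, Finset.ne_of_mem_erase hk, rfl⟩)

end Taylor

section Syzygies

variable (K : Type*) [Field K] {σ : Type*} {m : ℕ} (d : Fin (m + 1) → (σ →₀ ℕ))

def SpansSyzygies (T : Finset (Fin (m + 1) × Fin (m + 1))) : Prop :=
  (∀ p ∈ T, p.1 ≠ p.2) ∧
    Submodule.span (MvPolynomial σ K) (Function.uncurry (taylorRel K m d) '' T) =
      ker (phi K m d)

variable {K d}

theorem exists_minimal_spansSyzygies : ∃ T, Minimal (SpansSyzygies K d) T := by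
  classical
  refine exists_minimal_of_wellFoundedLT _ ⟨Finset.univ.filter fun p => p.1 ≠ p.2, ?_, ?_⟩
  · simp
  · simpa using span_taylorRel_eq_ker_phi (K := K) d

theorem taylorRel_notMem_span_of_minimal {T : Finset (Fin (m + 1) × Fin (m + 1))}
    (hT : Minimal (SpansSyzygies K d) T) {p : Fin (m + 1) × Fin (m + 1)} (hp : p ∈ T) :
    Function.uncurry (taylorRel K m d) p ∉ Submodule.span (MvPolynomial σ K)
      (Function.uncurry (taylorRel K m d) '' ↑(T.erase p)) := by
  classical
  intro hmem
  have hspans : SpansSyzygies K d (T.erase p) := by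
    refine ⟨fun q hq => hT.prop.1 q (Finset.mem_of_mem_erase hq), le_antisymm ?_ ?_⟩
    · rw [← hT.prop.2]
      exact Submodule.span_mono (Set.image_mono (Finset.erase_subset p T))
    · rw [← hT.prop.2, Submodule.span_le]
      rintro _ ⟨q, hq, rfl⟩
      by_cases hqp : q = p
      · exact hqp ▸ hmem
      · exact Submodule.subset_span ⟨q, Finset.mem_erase.mpr ⟨hqp, hq⟩, rfl⟩
  exact Finset.notMem_erase p T (hT.le_of_le hspans (Finset.erase_subset p T) hp)

theorem card_le_of_minimal [Module.Projective (MvPolynomial σ K) (ker (phi K m d))]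
    {T : Finset (Fin (m + 1) × Fin (m + 1))} (hT : Minimal (SpansSyzygies K d) T) :
    T.card ≤ m := by
  classical
  set r : T → Fin (m + 1) → MvPolynomial σ K := fun p => Function.uncurry (taylorRel K m d) p
  set syz := Fintype.linearCombination (MvPolynomial σ K) r
  have hrange : range syz = ker (phi K m d) := by
    rw [Fintype.range_linearCombination, ← hT.prop.2, Set.image_eq_range]; rfl
  have : Module.Projective (MvPolynomial σ K) (range syz) :=
    .of_equiv (LinearEquiv.ofEq _ _ hrange.symm)
  have hker : ker syz = ⊥ := by
    refine syz.ker_eq_bot_of_projective_range (RingHom.ker_ne_top constantCoeff)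
      fun z hz k => by_contra fun hk => taylorRel_notMem_span_of_minimal hT k.2 ?_
    have hrel : ∑ p, z p • r p = 0 := by
      simpa [syz, Fintype.linearCombination_apply] using hz
    have := taylorRel_mem_span_of_constantCoeff_ne_zero d (fun p : T => hT.prop.1 p p.2) hrel hk
    rw [Set.image_comp] at this
    convert this using 3
    ext
    constructor <;> aesop
  have hli : LinearIndependent (MvPolynomial σ K) r :=
    linearIndependent_iff_injective_fintypeLinearCombination.mpr (ker_eq_bot.mp hker)
  have := hli.card_lt_finrank_of_map_eq_zero (phi K m d)
    (fun p => phi_taylorRel d (hT.prop.1 p p.2)) (x := Pi.single 0 1)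
    (by simp [phi_eq_linearCombination, Fintype.linearCombination_apply_single])
  simpa using this

theorem SpansSyzygies.exists_isHB {T : Finset (Fin (m + 1) × Fin (m + 1))}
    (hT : SpansSyzygies K d T) (hcard : T.card ≤ m) : ∃ t, IsHB K m d t := by
  -- pad the list of the pairs of `T` with the harmless pairs `(k, k + 1)`
  let t : Fin m → Fin (m + 1) × Fin (m + 1) := fun k =>
    if h : (k : ℕ) < T.card then T.equivFin.symm ⟨k, h⟩ else (k.castSucc, k.succ)
  have ht (k : Fin m) : (t k).1 ≠ (t k).2 := by
    dsimp only [t]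
    split_ifs
    · exact hT.1 _ (Finset.coe_mem _)
    · exact Fin.castSucc_lt_succ.ne
  refine ⟨t, ht, le_antisymm (Submodule.span_le.mpr ?_) ?_⟩
  · rintro _ ⟨k, rfl⟩
    exact phi_taylorRel d (ht k)
  · rw [← hT.2]
    refine Submodule.span_mono ?_
    rintro _ ⟨p, hp, rfl⟩
    refine ⟨⟨T.equivFin ⟨p, hp⟩, (T.equivFin ⟨p, hp⟩).2.trans_le hcard⟩, ?_⟩
    simp [t, Function.uncurry_def]

theorem exists_isHB_of_resolution {a b : ℕ}
    (f : (Fin a → MvPolynomial σ K) →ₗ[MvPolynomial σ K] (Fin b → MvPolynomial σ K))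
    (g : (Fin b → MvPolynomial σ K) →ₗ[MvPolynomial σ K] MvPolynomial σ K)
    (hf : Function.Injective f) (hfg : range f = ker g) (hg : range g = range (phi K m d)) :
    ∃ t, IsHB K m d t := by
  have := Module.Projective.ker_of_range_eq_range f g (phi K m d) hf hfg hg
  obtain ⟨T, hT⟩ := exists_minimal_spansSyzygies (K := K) (d := d)
  exact hT.prop.exists_isHB (card_le_of_minimal hT)

end Syzygies

section RelationGraph

variable {K : Type*} [Field K] {σ : Type*} {m : ℕ} {d : Fin (m + 1) → (σ →₀ ℕ)}

theorem IsHB.relGraph_connected {t : Fin m → Fin (m + 1) × Fin (m + 1)} (ht : IsHB K m d t) :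
    (relGraph t).Connected := by
  classical
  refine (SimpleGraph.connected_iff _).mpr ⟨fun x y => by_contra fun hxy => ?_, ⟨0⟩⟩
  -- `φ₁` restricted to the connected component of `x` kills all rows, hence all syzygies
  set ψ := Fintype.linearCombination (MvPolynomial σ K) fun l =>
    if (relGraph t).Reachable x l then (monomial (d l) 1 : MvPolynomial σ K) else 0
  have hrow (k : Fin m) : ψ (taylorRel K m d (t k).1 (t k).2) = 0 := by
    have hadj : (relGraph t).Adj (t k).1 (t k).2 :=
      (SimpleGraph.fromRel_adj _ _ _).mpr ⟨ht.1 k, Or.inl ⟨k, rfl⟩⟩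
    rw [linearCombination_taylorRel d _ (ht.1 k)]
    by_cases hk : (relGraph t).Reachable x (t k).1
    · rw [if_pos hk, if_pos (hk.trans hadj.reachable), monomial_tsub_mul_monomial,
        monomial_tsub_mul_monomial, sup_comm, sub_self]
    · have hk' : ¬(relGraph t).Reachable x (t k).2 := fun h => hk (h.trans hadj.symm.reachable)
      simp [hk, hk']
  have hker : ker (phi K m d) ≤ ker ψ := by
    rw [← ht.2, Submodule.span_le]
    rintro _ ⟨k, rfl⟩
    exact hrow k
  have hne : y ≠ x := fun h => hxy (h ▸ SimpleGraph.Reachable.refl _)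
  have := hker (phi_taylorRel d hne)
  rw [mem_ker, linearCombination_taylorRel d _ hne] at this
  simp [hxy] at this

theorem relGraph_isTree_of_connected {t : Fin m → Fin (m + 1) × Fin (m + 1)}
    (h : (relGraph t).Connected) : (relGraph t).IsTree := by
  rw [SimpleGraph.isTree_iff_connected_and_card]
  refine ⟨h, le_antisymm ?_ h.card_vert_le_card_edgeSet_add_one⟩
  have hsub : (relGraph t).edgeSet ⊆ Set.range fun k => s((t k).1, (t k).2) := by
    rintro ⟨i, j⟩ hij
    obtain ⟨-, ⟨k, hk⟩ | ⟨k, hk⟩⟩ :=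
      (SimpleGraph.fromRel_adj _ _ _).mp ((relGraph t).mem_edgeSet.mp hij)
    · exact ⟨k, by simp [hk]⟩
    · exact ⟨k, by simp [hk, Sym2.eq_swap]⟩
  calc Nat.card (relGraph t).edgeSet + 1
      ≤ Nat.card (Set.range fun k => s((t k).1, (t k).2)) + 1 :=
        Nat.add_le_add_right (Nat.card_mono (Set.finite_range _) hsub) 1
    _ ≤ m + 1 := by simpa using Finite.card_range_le fun k => s((t k).1, (t k).2)
    _ = Nat.card (Fin (m + 1)) := by simp

end RelationGraph

end CMCodim2

open CMCodim2 MvPolynomial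
/-- Let `I ⊂ S` be a Cohen–Macaulay monomial ideal of codimension 2
minimally generated by `m+1` monomials. Then a minimal generating set of the first
syzygy module `U` can be chosen among the Taylor relations, i.e. `I` admits a
Hilbert–Burch matrix whose rows are Taylor relations; moreover, the graph on `[m+1]`
attached to any such matrix (an edge `{i,j}` whenever some row has its nonzero entries
in columns `i` and `j`) is a tree on `m+1` vertices. -/
theorem statement7 (K : Type*) [Field K] {n m : ℕ}
    (d : Fin (m + 1) → (Fin n →₀ ℕ)) (I : Ideal (MvPolynomial (Fin n) K))
    (hgen : MinGens K m d I) (hcm : IsCMCodim2 I) :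
    (∃ t : Fin m → Fin (m + 1) × Fin (m + 1), IsHB K m d t) ∧
      ∀ t : Fin m → Fin (m + 1) × Fin (m + 1), IsHB K m d t → (relGraph t).IsTree := by
  obtain ⟨hI, -⟩ := hgen
  obtain ⟨-, a, b, f, g, hf, hfg, hgI⟩ := hcm
  exact ⟨exists_isHB_of_resolution f g hf hfg (by rw [hgI, hI, range_phi]),
    fun t ht => relGraph_isTree_of_connected ht.relGraph_connected⟩
end

section
/- Let I = (u_1,...,u_{m+1}) be the monomial ideal in K[x_1,...,x_{m+1}] with u_i = x_1···x_{i-1}·x_{i+1}···x_{m+1} for i = 1,...,m+1 (the product of all variables except x_i). Then T(I) is the set of ALL trees on the vertex set [m+1]: every tree on [m+1] is a relation tree of I. -/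
open MvPolynomial

/-!
Write `g_k = x_k e_k`. For `i ≠ j` the Taylor relation of `u_i, u_j` is `g_j - g_i`, and every
`g_j - g_i` is a syzygy since `x_k u_k` is the product of all variables. Conversely `x_k` divides
the `k`-th coordinate of any syzygy (it divides every `u_l` with `l ≠ k` but not `u_k`), so a
syzygy is `∑ w_k g_k` with `∑ w_k = 0`, i.e. `∑ w_k (g_k - g_0)`. Hence the relations along the
edges of a graph generate the syzygy module iff the graph is connected: the `g_k` are linearly
independent, so `g_j - g_i` lies in the span of the edge differences only if `i` and `j` are
joined by a path. A connected graph on `m + 1` vertices with at most `m` edges is a tree, and a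
tree has exactly `m` edges.
-/

namespace SimpleGraph

variable {V M : Type*} (R : Type*) [Ring R] [AddCommGroup M] [Module R M]

def edgeDiffSpan (G : SimpleGraph V) (g : V → M) : Submodule R M :=
  Submodule.span R {v | ∃ a b, G.Adj a b ∧ g b - g a = v}

variable {R} {G : SimpleGraph V}

theorem Reachable.sub_mem_edgeDiffSpan (g : V → M) {i j : V} (h : G.Reachable i j) :
    g j - g i ∈ edgeDiffSpan R G g := by
  obtain ⟨p⟩ := h
  induction p with
  | nil => simp
  | @cons a b c hab _ ih =>
    rw [← sub_add_sub_cancel (g c) (g b) (g a)]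
    exact add_mem ih (Submodule.subset_span ⟨a, b, hab, rfl⟩)

theorem Reachable.of_sub_mem_edgeDiffSpan [Nontrivial R] {g : V → M}
    (hg : LinearIndependent R g) {i j : V} (h : g j - g i ∈ edgeDiffSpan R G g) :
    G.Reachable i j := by
  classical
  by_contra hij
  let L := Finsupp.linearCombination R g
  let δ : V → V →₀ R := fun a => Finsupp.single a 1
  have hL : ∀ a, L (δ a) = g a := fun a => by simp [L, δ]
  -- `σ` sums the coefficients over the component of `i`: it kills every edge difference
  -- but not `δ j - δ i`.
  let σ : (V →₀ R) →ₗ[R] R :=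
    Finsupp.linearCombination R fun k => if G.Reachable i k then 1 else 0
  have hdiff : {v | ∃ a b, G.Adj a b ∧ g b - g a = v} =
      L '' {w | ∃ a b, G.Adj a b ∧ δ b - δ a = w} := by
    ext v
    simp only [Set.mem_ofPred_eq, Set.mem_image]
    constructor
    · rintro ⟨a, b, hab, rfl⟩
      exact ⟨_, ⟨a, b, hab, rfl⟩, by simp [hL]⟩
    · rintro ⟨_, ⟨a, b, hab, rfl⟩, rfl⟩
      exact ⟨a, b, hab, by simp [hL]⟩
  rw [edgeDiffSpan, hdiff, Submodule.span_image] at h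
  obtain ⟨w, hw, hLw⟩ := h
  have hw' : w = δ j - δ i := hg (by rw [map_sub, hL, hL]; exact hLw)
  have hσ : σ w = 0 := by
    refine Submodule.span_induction ?_ (map_zero σ) (fun _ _ _ _ hx hy => by simp [hx, hy])
      (fun _ _ _ hx => by simp [hx]) hw
    rintro _ ⟨a, b, hab, rfl⟩
    have : G.Reachable i a ↔ G.Reachable i b := ⟨fun h => h.trans hab.reachable,
      fun h => h.trans hab.symm.reachable⟩
    simp [σ, δ, this]
  simp [hw', σ, δ, hij] at hσ

theorem edgeDiffSpan_fromRel {ι : Type*} (g : V → M) (t : ι → V × V)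
    (hne : ∀ k, (t k).1 ≠ (t k).2) :
    edgeDiffSpan R (fromRel fun a b => ∃ k, t k = (a, b)) g =
      Submodule.span R (Set.range fun k => g (t k).2 - g (t k).1) := by
  apply le_antisymm <;> rw [edgeDiffSpan, Submodule.span_le]
  · rintro _ ⟨a, b, ⟨-, ⟨k, hk⟩ | ⟨k, hk⟩⟩, rfl⟩
    · exact Submodule.subset_span ⟨k, by simp [hk]⟩
    · rw [← neg_sub]
      exact neg_mem (Submodule.subset_span ⟨k, by simp [hk]⟩)
  · rintro _ ⟨k, rfl⟩
    exact Submodule.subset_span ⟨_, _, (fromRel_adj _ _ _).2 ⟨hne k, Or.inl ⟨k, rfl⟩⟩, rfl⟩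

theorem card_edgeSet_fromRel_le {ι : Type*} [Finite ι] (t : ι → V × V) :
    Nat.card (fromRel fun a b => ∃ k, t k = (a, b)).edgeSet ≤ Nat.card ι := by
  refine (Nat.card_mono (Set.finite_range _) ?_).trans
    (Finite.card_range_le fun k => s((t k).1, (t k).2))
  intro e he
  induction e using Sym2.ind with
  | _ a b =>
    obtain ⟨-, ⟨k, hk⟩ | ⟨k, hk⟩⟩ := he
    · exact ⟨k, by simp [hk]⟩
    · exact ⟨k, by simp [hk, Sym2.eq_swap]⟩

theorem exists_fromRel_eq [Finite G.edgeSet] {n : ℕ} (hn : Nat.card G.edgeSet = n) :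
    ∃ t : Fin n → V × V,
      (∀ k, G.Adj (t k).1 (t k).2) ∧ fromRel (fun a b => ∃ k, t k = (a, b)) = G := by
  let e := Finite.equivFinOfCardEq hn
  choose t ht using fun k => Sym2.mk_surjective (e.symm k).1
  simp only [Function.uncurry] at ht
  have hadj : ∀ k, G.Adj (t k).1 (t k).2 := fun k => by
    rw [← mem_edgeSet, ht]; exact (e.symm k).2
  refine ⟨t, hadj, ?_⟩
  ext a b
  rw [fromRel_adj]
  constructor
  · rintro ⟨-, ⟨k, hk⟩ | ⟨k, hk⟩⟩
    · simpa [hk] using hadj k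
    · simpa [hk] using (hadj k).symm
  · intro hab
    have hk := ht (e ⟨s(a, b), hab⟩)
    rw [Equiv.symm_apply_apply, Sym2.eq_iff] at hk
    refine ⟨hab.ne, hk.imp (fun h => ⟨_, Prod.ext h.1 h.2⟩) (fun h => ⟨_, Prod.ext h.1 h.2⟩)⟩

theorem isTree_of_connected_of_card_le [Finite V] (hG : G.Connected)
    (hcard : Nat.card G.edgeSet + 1 ≤ Nat.card V) : G.IsTree :=
  isTree_iff_connected_and_card.2 ⟨hG, le_antisymm hcard hG.card_vert_le_card_edgeSet_add_one⟩

end SimpleGraph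

namespace CMCodim2

open Finset SimpleGraph

variable {m : ℕ}

noncomputable def exceptExp (m : ℕ) (i : Fin (m + 1)) : Fin (m + 1) →₀ ℕ :=
  ∑ k ∈ univ.erase i, Finsupp.single k 1

lemma exceptExp_apply (i l : Fin (m + 1)) : exceptExp m i l = if l = i then 0 else 1 := by
  simp [exceptExp, Finsupp.finsetSum_apply, Finsupp.single_apply]

lemma exceptExp_sub {i j : Fin (m + 1)} (h : i ≠ j) :
    exceptExp m i - exceptExp m j = Finsupp.single j 1 := by
  ext l
  simp only [Finsupp.tsub_apply, exceptExp_apply, Finsupp.single_apply]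
  split_ifs <;> omega

lemma exceptExp_add_single (i : Fin (m + 1)) :
    exceptExp m i + Finsupp.single i 1 = ∑ k, Finsupp.single k 1 :=
  sum_erase_add _ _ (mem_univ i)

variable (K : Type*) [Field K]

noncomputable def varVec (i : Fin (m + 1)) : Fin (m + 1) → MvPolynomial (Fin (m + 1)) K :=
  Pi.single i (X i)

lemma taylorRel_exceptExp {i j : Fin (m + 1)} (h : i ≠ j) :
    taylorRel K m (exceptExp m) i j = varVec K j - varVec K i := by
  funext k
  simp only [taylorRel, varVec, Pi.sub_apply, Pi.single_apply]
  split_ifs <;> simp_all [exceptExp_sub, Ne.symm h, X]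

lemma phi_varVec (i : Fin (m + 1)) :
    phi K m (exceptExp m) (varVec K i) = monomial (∑ k, Finsupp.single k 1) 1 := by
  simp [phi, varVec, Pi.single_apply, X, monomial_mul, add_comm, exceptExp_add_single]

lemma linearIndependent_varVec :
    LinearIndependent (MvPolynomial (Fin (m + 1)) K) (varVec K (m := m)) := by
  rw [linearIndependent_iff']
  intro s c hs i hi
  simpa [varVec, Finset.sum_apply, Pi.single_apply, hi] using congrFun hs i

lemma X_dvd_of_mem_ker_phi {v : Fin (m + 1) → MvPolynomial (Fin (m + 1)) K}
    (hv : v ∈ LinearMap.ker (phi K m (exceptExp m))) (k : Fin (m + 1)) : X k ∣ v k := by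
  have hsum : ∑ l, v l * monomial (exceptExp m l) 1 = 0 := hv
  rw [← add_sum_erase _ _ (mem_univ k)] at hsum
  have hrest : X k ∣ ∑ l ∈ univ.erase k, v l * monomial (exceptExp m l) 1 :=
    dvd_sum fun l hl => dvd_mul_of_dvd_right
      (X_dvd_monomial.2 (Or.inr (by simp [exceptExp_apply, (ne_of_mem_erase hl).symm]))) _
  have hk : X k ∣ v k * monomial (exceptExp m k) 1 := (dvd_add_left hrest).1 (hsum ▸ dvd_zero _)
  refine (X_prime.dvd_or_dvd hk).resolve_right ?_
  simp [X_dvd_monomial, exceptExp_apply]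

lemma ker_phi_le_edgeDiffSpan {Γ : SimpleGraph (Fin (m + 1))} (hΓ : Γ.Connected) :
    LinearMap.ker (phi K m (exceptExp m)) ≤ edgeDiffSpan _ Γ (varVec K) := by
  intro v hv
  choose w hw using X_dvd_of_mem_ker_phi K hv
  have hvw : v = ∑ k, w k • varVec K k := by
    funext l
    simp [varVec, Finset.sum_apply, Pi.single_apply, hw, mul_comm]
  have hw0 : ∑ k, w k = 0 := by
    have h0 : phi K m (exceptExp m) v = 0 := hv
    simpa [hvw, phi_varVec, ← sum_mul, monomial_eq_zero] using h0
  have hv0 : v = ∑ k, w k • (varVec K k - varVec K 0) := by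
    simp [hvw, smul_sub, sum_sub_distrib, ← sum_smul, hw0]
  rw [hv0]
  exact sum_mem fun k _ => Submodule.smul_mem _ _ ((hΓ.preconnected 0 k).sub_mem_edgeDiffSpan _)

lemma varVec_sub_mem_ker_phi (i j : Fin (m + 1)) :
    varVec K j - varVec K i ∈ LinearMap.ker (phi K m (exceptExp m)) := by
  simp [phi_varVec]

lemma edgeDiffSpan_le_ker_phi (Γ : SimpleGraph (Fin (m + 1))) :
    edgeDiffSpan _ Γ (varVec K) ≤ LinearMap.ker (phi K m (exceptExp m)) := by
  rw [edgeDiffSpan, Submodule.span_le]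
  rintro _ ⟨a, b, -, rfl⟩
  exact varVec_sub_mem_ker_phi K a b

lemma span_taylorRel_exceptExp {t : Fin m → Fin (m + 1) × Fin (m + 1)}
    (hne : ∀ k, (t k).1 ≠ (t k).2) :
    Submodule.span (MvPolynomial (Fin (m + 1)) K)
        (Set.range fun k => taylorRel K m (exceptExp m) (t k).1 (t k).2) =
      edgeDiffSpan _ (relGraph t) (varVec K) := by
  rw [relGraph, edgeDiffSpan_fromRel _ _ hne]
  simp only [taylorRel_exceptExp K (hne _)]

lemma isTree_relGraph_of_isHB {t : Fin m → Fin (m + 1) × Fin (m + 1)}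
    (ht : IsHB K m (exceptExp m) t) : (relGraph t).IsTree := by
  obtain ⟨hne, hspan⟩ := ht
  rw [span_taylorRel_exceptExp K hne] at hspan
  have hconn : (relGraph t).Connected := by
    refine (connected_iff _).2 ⟨fun i j => Reachable.of_sub_mem_edgeDiffSpan
      (linearIndependent_varVec K) ?_, inferInstance⟩
    rw [hspan]
    exact varVec_sub_mem_ker_phi K i j
  refine isTree_of_connected_of_card_le hconn ?_
  exact (Nat.add_le_add_right (card_edgeSet_fromRel_le t) 1).trans (by simp)

lemma exists_isHB_of_isTree {Γ : SimpleGraph (Fin (m + 1))} (hΓ : Γ.IsTree) :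
    ∃ t, IsHB K m (exceptExp m) t ∧ relGraph t = Γ := by
  have hcard : Nat.card Γ.edgeSet = m := by
    simpa using (isTree_iff_connected_and_card.1 hΓ).2
  obtain ⟨t, hadj, ht⟩ := exists_fromRel_eq hcard
  have hne : ∀ k, (t k).1 ≠ (t k).2 := fun k => (hadj k).ne
  refine ⟨t, ⟨hne, ?_⟩, ht⟩
  rw [span_taylorRel_exceptExp K hne, relGraph, ht]
  exact le_antisymm (edgeDiffSpan_le_ker_phi K Γ) (ker_phi_le_edgeDiffSpan K hΓ.connected)

end CMCodim2

open CMCodim2 MvPolynomial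

/-- Let `I = (u_1,...,u_{m+1})` be the monomial ideal in
`K[x_1,...,x_{m+1}]` with `u_i = x_1 ⋯ x_{i-1} · x_{i+1} ⋯ x_{m+1}` (the product of all
variables except `x_i`). Then `T(I)` is the set of ALL trees on the vertex set `[m+1]`. -/
theorem statement10 (K : Type*) [Field K] {m : ℕ} :
    relTrees K m (fun i : Fin (m + 1) => ∑ k ∈ Finset.univ.erase i, Finsupp.single k 1) =
      {Γ : SimpleGraph (Fin (m + 1)) | Γ.IsTree} := by
  ext Γ
  constructor
  · rintro ⟨t, ht, rfl⟩
    exact isTree_relGraph_of_isHB K ht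
  · exact exists_isHB_of_isTree K
end

section
/- Let I ⊂ S be a Cohen–Macaulay monomial ideal of codimension 2 with a linear resolution, and let G(I) be its Taylor graph. If C is a cycle in G(I), then the restriction of G(I) to the vertex set of C is a complete graph; that is, any two distinct vertices of C are adjacent in G(I). In particular, G(I) is a chordal graph. -/
open MvPolynomial

/-!
Fix one Hilbert–Burch matrix, with rows the Taylor relations `r_l` of lcm `λ_l`. Reading off the
coefficients of a fixed multidegree `μ` is a `K`-linear map from syzygies to `K^{m+1}` which sends
the Taylor relation of `i, j` with lcm `μ` to `e_j - e_i`, and sends every syzygy into the span of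
the vectors `e_q - e_p` of the rows with `λ_l ≤ μ`. Hence these `m` row vectors span the sum-zero
hyperplane and are linearly independent.

With a linear resolution every `λ_l` has degree `c + 1`, so a Taylor relation whose lcm has degree
`c + 1` is a `K`-combination of rows with that same lcm; exchanging it for one of them gives another
Hilbert–Burch matrix, so such a pair is an edge of the Taylor graph. Along a cycle the vectors
`e_{v_{i+1}} - e_{v_i}` sum to zero, so by linear independence the edges of each lcm already sum to
zero, which forces all edges of the cycle to have the same lcm `μ`. Any two distinct vertices of the
cycle then have lcm `μ`, hence are adjacent. In a cycle of length at least `4` the vertices `0` and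
`2` thus form a chord.
-/

namespace Submodule

lemma exists_fun_of_mem_span_image {R M ι : Type*} [Semiring R] [AddCommMonoid M] [Module R M]
    [Fintype ι] {v : ι → M} {s : Set ι} {x : M} (hx : x ∈ span R (v '' s)) :
    ∃ c : ι → R, (∀ i, c i ≠ 0 → i ∈ s) ∧ ∑ i, c i • v i = x := by
  obtain ⟨c, hc, rfl⟩ := (Finsupp.mem_span_image_iff_linearCombination R).mp hx
  refine ⟨c, fun i hi => hc (Finsupp.mem_support_iff.mpr hi), ?_⟩
  rw [Finsupp.linearCombination_apply, Finsupp.sum_fintype _ _ fun _ => zero_smul R (v _)]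

lemma span_range_update_sum_smul {R A M ι : Type*} [Field R] [CommRing A] [Algebra R A]
    [AddCommGroup M] [Module R M] [Module A M] [IsScalarTower R A M] [Fintype ι] [DecidableEq ι]
    (v : ι → M) {c : ι → R} {l₀ : ι} (hl₀ : c l₀ ≠ 0) :
    span A (Set.range (Function.update v l₀ (∑ l, c l • v l))) = span A (Set.range v) := by
  refine le_antisymm ?_ ?_ <;> simp only [span_le, Set.range_subset_iff, SetLike.mem_coe] <;>
    intro k <;> obtain rfl | hk := eq_or_ne k l₀
  · rw [Function.update_self]
    exact sum_mem fun l _ => smul_of_tower_mem _ _ (subset_span ⟨l, rfl⟩)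
  · exact subset_span ⟨k, (Function.update_of_ne hk ..).symm⟩
  · have hsplit := Finset.add_sum_erase Finset.univ (fun l => c l • v l) (Finset.mem_univ k)
    have hv : v k = (c k)⁻¹ • ((∑ l, c l • v l) - ∑ l ∈ Finset.univ.erase k, c l • v l) := by
      rw [← hsplit, add_sub_cancel_right, smul_smul, inv_mul_cancel₀ hl₀, one_smul]
    rw [hv]
    refine smul_of_tower_mem _ _ (sub_mem (subset_span ⟨k, Function.update_self ..⟩)
      (sum_mem fun l hl => smul_of_tower_mem _ _ (subset_span ⟨l, ?_⟩)))
    exact Function.update_of_ne (Finset.ne_of_mem_erase hl) ..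
  · exact subset_span ⟨k, Function.update_of_ne hk ..⟩

end Submodule

theorem LinearIndependent.sum_filter_eq_zero_of_sum_eq_zero {R M ι κ α : Type*} [Ring R]
    [AddCommGroup M] [Module R M] [DecidableEq κ] {v : ι → M} (hv : LinearIndependent R v)
    {g : ι → κ} {s : Finset α} {x : α → M} {μ : α → κ}
    (hx : ∀ a ∈ s, x a ∈ Submodule.span R (v '' {i | g i = μ a})) (hsum : ∑ a ∈ s, x a = 0)
    (k : κ) : ∑ a ∈ s with μ a = k, x a = 0 := by
  have hin : ∑ a ∈ s with μ a = k, x a ∈ Submodule.span R (v '' {i | g i = k}) :=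
    Submodule.sum_mem _ fun a ha => by
      obtain ⟨has, rfl⟩ := Finset.mem_filter.mp ha
      exact hx a has
  have hout : ∑ a ∈ s with ¬μ a = k, x a ∈ Submodule.span R (v '' {i | g i = k}ᶜ) :=
    Submodule.sum_mem _ fun a ha => by
      obtain ⟨has, hak⟩ := Finset.mem_filter.mp ha
      exact Submodule.span_mono (Set.image_mono fun i (hi : g i = μ a) (hk : g i = k) =>
        hak (hi ▸ hk)) (hx a has)
  have hneg : ∑ a ∈ s with μ a = k, x a = -∑ a ∈ s with ¬μ a = k, x a :=
    eq_neg_of_add_eq_zero_left ((Finset.sum_filter_add_sum_filter_not s _ x).trans hsum)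
  exact Submodule.disjoint_def.mp (hv.disjoint_span_image disjoint_compl_right) _ hin
    (hneg ▸ neg_mem hout)

namespace CMCodim2

section ExponentVectors

variable {σ : Type*}

lemma mdeg_eq_degree (a : σ →₀ ℕ) : mdeg a = a.degree := rfl

lemma mdeg_mono : Monotone (mdeg : (σ →₀ ℕ) → ℕ) := Finsupp.degree_mono

lemma eq_of_le_of_mdeg_le {a b : σ →₀ ℕ} (h : a ≤ b) (hd : mdeg b ≤ mdeg a) : a = b := by
  obtain ⟨c, rfl⟩ := exists_add_of_le h
  rw [mdeg_eq_degree, mdeg_eq_degree, map_add] at hd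
  rw [(Finsupp.degree_eq_zero_iff c).mp (by omega), add_zero]

lemma mdeg_sup (a b : σ →₀ ℕ) : mdeg (a ⊔ b) = mdeg (a - b) + mdeg b := by
  rw [mdeg_eq_degree, mdeg_eq_degree, mdeg_eq_degree, ← map_add]
  congr 1
  ext x
  simp only [Finsupp.sup_apply, Finsupp.add_apply, Finsupp.tsub_apply]
  omega

lemma sup_tsub_right (a b : σ →₀ ℕ) : a ⊔ b - b = a - b := by
  ext x
  simp only [Finsupp.sup_apply, Finsupp.tsub_apply]
  omega

end ExponentVectors

section EdgeVectors

variable {R : Type*} [CommRing R] {ι : Type*} [DecidableEq ι]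

variable (R) in
def edgeVec (i j : ι) : ι → R := Pi.single j 1 - Pi.single i 1

lemma sum_edgeVec [Fintype ι] (i j : ι) : ∑ k, edgeVec R i j k = 0 := by
  simp [edgeVec, Finset.sum_sub_distrib]

lemma edgeVec_ne_zero [Nontrivial R] {i j : ι} (hij : i ≠ j) : edgeVec R i j ≠ 0 := by
  intro h
  simpa [edgeVec, hij] using congrFun h j

lemma le_sup_of_edgeVec_ne_zero {σ : Type*} (d : ι → σ →₀ ℕ) {i j k : ι}
    (hk : edgeVec R i j k ≠ 0) : d k ≤ d i ⊔ d j := by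
  by_cases hkj : k = j
  · exact hkj ▸ le_sup_right
  by_cases hki : k = i
  · exact hki ▸ le_sup_left
  simp [edgeVec, hkj, hki] at hk

lemma forall_of_sum_filter_edgeVec_eq_zero [Nontrivial R] {G : SimpleGraph ι} {u : ι}
    {w : G.Walk u u} (hw : w.IsCycle) {P : ℕ → Prop} [DecidablePred P] (h0 : P 0)
    (hsum : ∑ i ∈ Finset.range w.length with P i,
      edgeVec R (w.getVert i) (w.getVert (i + 1)) = 0) :
    ∀ i < w.length, P i := by
  intro i
  induction i with
  | zero => exact fun _ => h0
  | succ j ih =>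
    intro hj
    by_contra hPj
    have hsucc : ∀ i < w.length, w.getVert (j + 1) = w.getVert (i + 1) ↔ j = i :=
      fun i hi => ⟨fun h => by
        have := hw.getVert_injOn (by simp; omega) (by simp; omega) h; omega, by rintro rfl; rfl⟩
    have hself : ∀ i < w.length, w.getVert (j + 1) = w.getVert i ↔ j + 1 = i :=
      fun i hi => ⟨fun h => hw.getVert_injOn' (by simp; omega) (by simp; omega) h,
        by rintro rfl; rfl⟩
    -- at `w.getVert (j + 1)` only the edges `j` (with `P`) and `j + 1` (without `P`) contribute
    have hcoord := congrFun hsum (w.getVert (j + 1))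
    rw [Finset.sum_apply] at hcoord
    rw [Finset.sum_congr rfl fun i hi => by
      have hi : i < w.length := Finset.mem_range.mp (Finset.mem_filter.mp hi).1
      rw [edgeVec, Pi.sub_apply, Pi.single_apply, Pi.single_apply, if_congr (hsucc i hi) rfl rfl,
        if_congr (hself i hi) rfl rfl]] at hcoord
    simp [Finset.sum_sub_distrib, Finset.sum_ite_eq, ih (by omega), hPj] at hcoord
    omega

end EdgeVectors

noncomputable section GradedVectors

variable {R : Type*} [CommRing R] {σ ι : Type*}

/-- `liftVec d μ` and `coeffVec d μ` identify `R^ι` with the multidegree-`μ` part of the graded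
free module `⊕ₖ S(-d k)`, at least on the coordinates `k` with `d k ≤ μ`. -/
def liftVec (d : ι → σ →₀ ℕ) (μ : σ →₀ ℕ) : (ι → R) →ₗ[R] (ι → MvPolynomial σ R) :=
  LinearMap.pi fun k => monomial (μ - d k) ∘ₗ LinearMap.proj k

def coeffVec (d : ι → σ →₀ ℕ) (μ : σ →₀ ℕ) : (ι → MvPolynomial σ R) →ₗ[R] (ι → R) :=
  LinearMap.pi fun k =>
    lcoeff R μ ∘ₗ LinearMap.mulRight R (monomial (d k) 1) ∘ₗ LinearMap.proj k

lemma liftVec_apply (d : ι → σ →₀ ℕ) (μ : σ →₀ ℕ) (c : ι → R) (k : ι) :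
    liftVec d μ c k = monomial (μ - d k) (c k) := rfl

lemma coeffVec_apply (d : ι → σ →₀ ℕ) (μ : σ →₀ ℕ) (v : ι → MvPolynomial σ R) (k : ι) :
    coeffVec d μ v k = coeff μ (v k * monomial (d k) 1) := rfl

lemma coeffVec_smul_liftVec (d : ι → σ →₀ ℕ) {μ ν : σ →₀ ℕ} {c : ι → R}
    (hc : ∀ k, c k ≠ 0 → d k ≤ ν) (f : MvPolynomial σ R) :
    coeffVec d μ (f • liftVec d ν c) = coeff μ (f * monomial ν 1) • c := by
  funext k
  rw [coeffVec_apply, Pi.smul_apply, liftVec_apply, Pi.smul_apply, smul_eq_mul, smul_eq_mul]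
  by_cases hck : c k = 0
  · simp [hck]
  rw [mul_assoc, monomial_mul, tsub_add_cancel_of_le (hc k hck), mul_one,
    coeff_mul_monomial', coeff_mul_monomial']
  split_ifs <;> simp

end GradedVectors

variable {K : Type*} [Field K] {σ : Type*} {m : ℕ} {d : Fin (m + 1) → σ →₀ ℕ}
  {t : Fin m → Fin (m + 1) × Fin (m + 1)}

lemma MinGens.injective {I : Ideal (MvPolynomial σ K)} (h : MinGens K m d I) :
    Function.Injective d := by
  intro i j hij
  by_contra hne
  exact h.2 j (Ideal.subset_span ⟨i, hne, by simp only [hij]⟩)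

lemma taylorRel_eq_liftVec {i j : Fin (m + 1)} (hij : i ≠ j) :
    taylorRel K m d i j = liftVec d (d i ⊔ d j) (edgeVec K i j) := by
  funext k
  rw [liftVec_apply]
  by_cases hkj : k = j
  · subst hkj
    simp [taylorRel, edgeVec, hij, sup_tsub_right]
  by_cases hki : k = i
  · subst hki
    simp [taylorRel, edgeVec, hkj, sup_comm (d k), sup_tsub_right]
  · simp [taylorRel, edgeVec, hkj, hki]

lemma coeffVec_smul_taylorRel {i j : Fin (m + 1)} (hij : i ≠ j) (μ : σ →₀ ℕ)
    (f : MvPolynomial σ K) :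
    coeffVec d μ (f • taylorRel K m d i j) =
      coeff μ (f * monomial (d i ⊔ d j) 1) • edgeVec K i j := by
  rw [taylorRel_eq_liftVec hij]
  exact coeffVec_smul_liftVec d (fun _ => le_sup_of_edgeVec_ne_zero d) f

lemma coeffVec_taylorRel_self {i j : Fin (m + 1)} (hij : i ≠ j) :
    coeffVec d (d i ⊔ d j) (taylorRel K m d i j) = edgeVec K i j := by
  classical
  rw [← one_smul (MvPolynomial σ K) (taylorRel K m d i j), coeffVec_smul_taylorRel hij, one_mul,
    coeff_monomial, if_pos rfl, one_smul]

lemma coeff_phi (μ : σ →₀ ℕ) (v : Fin (m + 1) → MvPolynomial σ K) :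
    coeff μ (phi K m d v) = ∑ k, coeffVec d μ v k := by
  simp [phi, coeffVec_apply, coeff_sum]

lemma taylorRel_mem_ker {i j : Fin (m + 1)} (hij : i ≠ j) :
    taylorRel K m d i j ∈ LinearMap.ker (phi K m d) := by
  rw [LinearMap.mem_ker]
  ext μ
  rw [coeff_phi, ← one_smul (MvPolynomial σ K) (taylorRel K m d i j),
    coeffVec_smul_taylorRel hij]
  simp [← Finset.mul_sum, sum_edgeVec]

variable (K) in
def rowVec (t : Fin m → Fin (m + 1) × Fin (m + 1)) (l : Fin m) : Fin (m + 1) → K :=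
  edgeVec K (t l).1 (t l).2

lemma coeffVec_mem_span_rowVec (ht : IsHB K m d t) {v : Fin (m + 1) → MvPolynomial σ K}
    (hv : v ∈ LinearMap.ker (phi K m d)) (μ : σ →₀ ℕ) :
    coeffVec d μ v ∈ Submodule.span K (rowVec K t '' {l | d (t l).1 ⊔ d (t l).2 ≤ μ}) := by
  rw [← ht.2] at hv
  obtain ⟨f, rfl⟩ := (Submodule.mem_span_range_iff_exists_fun _).mp hv
  rw [map_sum]
  refine Submodule.sum_mem _ fun l _ => ?_
  rw [coeffVec_smul_taylorRel (ht.1 l), coeff_mul_monomial']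
  split_ifs with hl
  · exact Submodule.smul_mem _ _ (Submodule.subset_span ⟨l, hl, rfl⟩)
  · rw [zero_smul]
    exact zero_mem _

lemma edgeVec_mem_span_rowVec (ht : IsHB K m d t) {i j : Fin (m + 1)} (hij : i ≠ j) :
    edgeVec K i j ∈ Submodule.span K (rowVec K t '' {l | d (t l).1 ⊔ d (t l).2 ≤ d i ⊔ d j}) :=
  coeffVec_taylorRel_self (K := K) hij ▸
    coeffVec_mem_span_rowVec ht (taylorRel_mem_ker hij) (d i ⊔ d j)

lemma linearIndependent_rowVec (ht : IsHB K m d t) : LinearIndependent K (rowVec K t) := by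
  rw [linearIndependent_iff_card_eq_finrank_span, Fintype.card_fin]
  refine le_antisymm ?_ ((finrank_range_le_card (R := K) _).trans_eq (Fintype.card_fin m))
  set W := Submodule.span K (Set.range (rowVec K t))
  have hW : W ⊔ K ∙ Pi.single 0 1 = ⊤ := by
    rw [eq_top_iff, ← (Pi.basisFun K (Fin (m + 1))).span_eq, Submodule.span_le]
    rintro _ ⟨j, rfl⟩
    have hj : edgeVec K 0 j ∈ W := by
      by_cases h : (0 : Fin (m + 1)) = j
      · simp [h, edgeVec]
      · exact Submodule.span_mono (Set.image_subset_range _ _) (edgeVec_mem_span_rowVec ht h)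
    rw [Pi.basisFun_apply, show Pi.single j 1 = edgeVec K 0 j + Pi.single 0 1 by simp [edgeVec]]
    exact add_mem (Submodule.mem_sup_left hj)
      (Submodule.mem_sup_right (Submodule.mem_span_singleton_self _))
  have hle := Submodule.finrank_add_le_finrank_add_finrank W (K ∙ Pi.single 0 1)
  rw [hW, finrank_top, Module.finrank_fin_fun, finrank_span_singleton (by simp)] at hle
  exact Nat.le_of_add_le_add_right hle

lemma IsHB.update (ht : IsHB K m d t) {i j : Fin (m + 1)} (hij : i ≠ j) {a : Fin m → K}
    (hsum : ∑ l, a l • taylorRel K m d (t l).1 (t l).2 = taylorRel K m d i j) {l₀ : Fin m}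
    (hl₀ : a l₀ ≠ 0) : IsHB K m d (Function.update t l₀ (i, j)) := by
  refine ⟨fun k => ?_, ?_⟩
  · obtain rfl | hk := eq_or_ne k l₀
    · simpa using hij
    · simpa [Function.update_of_ne hk] using ht.1 k
  · have hrows : (fun k => taylorRel K m d (Function.update t l₀ (i, j) k).1
        (Function.update t l₀ (i, j) k).2) =
        Function.update (fun k => taylorRel K m d (t k).1 (t k).2) l₀ (taylorRel K m d i j) := by
      funext k
      obtain rfl | hk := eq_or_ne k l₀ <;> simp [Function.update_of_ne, *]
    rw [hrows, ← hsum, Submodule.span_range_update_sum_smul _ hl₀, ht.2]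

lemma exists_isHB_of_taylorGraph_adj {i j : Fin (m + 1)} (h : (taylorGraph K m d).Adj i j) :
    ∃ t, IsHB K m d t ∧ ∃ k, t k = (i, j) ∨ t k = (j, i) := by
  obtain ⟨_, ⟨t, ht, rfl⟩, hadj⟩ := SimpleGraph.sSup_adj.mp h
  exact ⟨t, ht, by simpa [relGraph, exists_or] using hadj.2⟩

lemma taylorGraph_adj_of_isHB (ht : IsHB K m d t) (k : Fin m) :
    (taylorGraph K m d).Adj (t k).1 (t k).2 :=
  SimpleGraph.sSup_adj.mpr ⟨relGraph t, ⟨t, ht, rfl⟩, ht.1 k, Or.inl ⟨k, rfl⟩⟩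

lemma mdeg_sup_of_isHB {c : ℕ} (hc : ∀ k, mdeg (d k) = c) (hlin : HasLinearRes K m d)
    (ht : IsHB K m d t) (l : Fin m) : mdeg (d (t l).1 ⊔ d (t l).2) = c + 1 := by
  rw [mdeg_sup, (hlin.2 t ht l).1, hc, add_comm]

lemma mdeg_sup_of_taylorGraph_adj {c : ℕ} (hc : ∀ k, mdeg (d k) = c)
    (hlin : HasLinearRes K m d) {i j : Fin (m + 1)} (h : (taylorGraph K m d).Adj i j) :
    mdeg (d i ⊔ d j) = c + 1 := by
  obtain ⟨t, ht, k, hk | hk⟩ := exists_isHB_of_taylorGraph_adj h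
  · simpa [hk] using mdeg_sup_of_isHB hc hlin ht k
  · simpa [hk, sup_comm] using mdeg_sup_of_isHB hc hlin ht k

lemma edgeVec_mem_span_rowVec_eq_sup {c : ℕ} (hc : ∀ k, mdeg (d k) = c)
    (hlin : HasLinearRes K m d) (ht : IsHB K m d t) {i j : Fin (m + 1)} (hij : i ≠ j)
    (hdeg : mdeg (d i ⊔ d j) = c + 1) :
    edgeVec K i j ∈ Submodule.span K (rowVec K t '' {l | d (t l).1 ⊔ d (t l).2 = d i ⊔ d j}) :=
  Submodule.span_mono (Set.image_mono fun l (hl : _ ≤ _) =>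
      eq_of_le_of_mdeg_le hl ((mdeg_sup_of_isHB hc hlin ht l).symm ▸ hdeg.le))
    (edgeVec_mem_span_rowVec ht hij)

lemma exists_sum_smul_eq_taylorRel {c : ℕ} (hc : ∀ k, mdeg (d k) = c)
    (hlin : HasLinearRes K m d) (ht : IsHB K m d t) {i j : Fin (m + 1)} (hij : i ≠ j)
    (hdeg : mdeg (d i ⊔ d j) = c + 1) :
    ∃ a : Fin m → K, a ≠ 0 ∧
      ∑ l, a l • taylorRel K m d (t l).1 (t l).2 = taylorRel K m d i j := by
  obtain ⟨a, ha, hsum⟩ := Submodule.exists_fun_of_mem_span_image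
    (edgeVec_mem_span_rowVec_eq_sup hc hlin ht hij hdeg)
  refine ⟨a, ?_, ?_⟩
  · rintro rfl
    exact edgeVec_ne_zero hij (by simpa using hsum.symm)
  rw [taylorRel_eq_liftVec hij, ← hsum, map_sum]
  refine Finset.sum_congr rfl fun l _ => ?_
  by_cases hl : a l = 0
  · simp [hl]
  rw [map_smul, rowVec, taylorRel_eq_liftVec (ht.1 l), ha l hl]

lemma taylorGraph_adj_of_mdeg_sup {c : ℕ} (hc : ∀ k, mdeg (d k) = c)
    (hlin : HasLinearRes K m d) (ht : IsHB K m d t) {i j : Fin (m + 1)} (hij : i ≠ j)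
    (hdeg : mdeg (d i ⊔ d j) = c + 1) : (taylorGraph K m d).Adj i j := by
  obtain ⟨a, ha, hsum⟩ := exists_sum_smul_eq_taylorRel hc hlin ht hij hdeg
  obtain ⟨l₀, hl₀⟩ := Function.ne_iff.mp ha
  simpa using taylorGraph_adj_of_isHB (ht.update hij hsum hl₀) l₀

/-- All edges of a cycle of the Taylor graph have the same lcm: writing each edge vector as a
combination of rows of one Hilbert–Burch matrix with that lcm, the edges of each lcm sum to zero
by linear independence of the rows. -/
lemma le_sup_of_mem_support_of_isCycle {c : ℕ} (hc : ∀ k, mdeg (d k) = c)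
    (hlin : HasLinearRes K m d) {v : Fin (m + 1)} {w : (taylorGraph K m d).Walk v v}
    (hw : w.IsCycle) {x : Fin (m + 1)} (hx : x ∈ w.support) :
    d x ≤ d v ⊔ d (w.getVert 1) := by
  classical
  set μ : ℕ → σ →₀ ℕ := fun i => d (w.getVert i) ⊔ d (w.getVert (i + 1))
  have hadj : ∀ i < w.length, (taylorGraph K m d).Adj (w.getVert i) (w.getVert (i + 1)) :=
    fun i hi => w.adj_getVert_succ hi
  obtain ⟨t, ht, -⟩ := exists_isHB_of_taylorGraph_adj (hadj 0 (by linarith [hw.three_le_length]))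
  have hmem : ∀ i ∈ Finset.range w.length, edgeVec K (w.getVert i) (w.getVert (i + 1)) ∈
      Submodule.span K (rowVec K t '' {l | d (t l).1 ⊔ d (t l).2 = μ i}) := fun i hi =>
    have hi := hadj i (Finset.mem_range.mp hi)
    edgeVec_mem_span_rowVec_eq_sup hc hlin ht hi.ne (mdeg_sup_of_taylorGraph_adj hc hlin hi)
  have hsum : ∑ i ∈ Finset.range w.length, edgeVec K (w.getVert i) (w.getVert (i + 1)) = 0 := by
    simp only [edgeVec]
    rw [Finset.sum_range_sub (fun i => (Pi.single (w.getVert i) 1 : Fin (m + 1) → K)),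
      w.getVert_length, w.getVert_zero, sub_self]
  have hconst := forall_of_sum_filter_edgeVec_eq_zero hw (P := fun i => μ i = μ 0) rfl
    ((linearIndependent_rowVec ht).sum_filter_eq_zero_of_sum_eq_zero hmem hsum (μ 0))
  obtain ⟨n, rfl, hn⟩ := SimpleGraph.Walk.mem_support_iff_exists_getVert.mp hx
  rcases hn.lt_or_eq with hn | rfl
  · simpa [μ, hconst n hn] using (le_sup_left : d (w.getVert n) ≤ μ n)
  · simp

lemma taylorGraph_adj_of_mem_support_of_isCycle (hd : Function.Injective d)
    (hlin : HasLinearRes K m d) {v : Fin (m + 1)} {w : (taylorGraph K m d).Walk v v}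
    (hw : w.IsCycle) {a b : Fin (m + 1)} (ha : a ∈ w.support) (hb : b ∈ w.support)
    (hab : a ≠ b) : (taylorGraph K m d).Adj a b := by
  obtain ⟨c, hc⟩ := hlin.1
  have hadj : (taylorGraph K m d).Adj v (w.getVert 1) := by
    simpa using w.adj_getVert_succ (i := 0) (by linarith [hw.three_le_length])
  obtain ⟨t, ht, -⟩ := exists_isHB_of_taylorGraph_adj hadj
  have hle : mdeg (d a ⊔ d b) ≤ c + 1 := mdeg_sup_of_taylorGraph_adj hc hlin hadj ▸
    mdeg_mono (sup_le (le_sup_of_mem_support_of_isCycle hc hlin hw ha)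
      (le_sup_of_mem_support_of_isCycle hc hlin hw hb))
  have hge : c ≤ mdeg (d a ⊔ d b) := hc a ▸ mdeg_mono le_sup_left
  have hne : mdeg (d a ⊔ d b) ≠ c := fun h => hab <| hd <|
    (eq_of_le_of_mdeg_le le_sup_left (by rw [h, hc])).trans
      (eq_of_le_of_mdeg_le le_sup_right (by rw [h, hc])).symm
  exact taylorGraph_adj_of_mdeg_sup hc hlin ht hab (by omega)

lemma isChordal_of_forall_isCycle_adj {V : Type*} {G : SimpleGraph V}
    (h : ∀ (v : V) (w : G.Walk v v), w.IsCycle →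
      ∀ a ∈ w.support, ∀ b ∈ w.support, a ≠ b → G.Adj a b) : IsChordal G := by
  intro v w hw hlen
  have hinj : ∀ {i j}, i < w.length → j < w.length → w.getVert i = w.getVert j → i = j :=
    fun hi hj hij => hw.getVert_injOn' (by simp; omega) (by simp; omega) hij
  have h02 : w.getVert 0 ≠ w.getVert 2 := fun h => by have := hinj (by omega) (by omega) h; omega
  refine ⟨_, _, w.getVert_mem_support 0, w.getVert_mem_support 2,
    h v w hw _ (w.getVert_mem_support 0) _ (w.getVert_mem_support 2) h02, fun hmem => ?_⟩
  obtain ⟨i, hi, he⟩ := (SimpleGraph.Walk.mk_mem_edges_iff_exists w).mp hmem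
  rcases Sym2.eq_iff.mp he with ⟨h1, h2⟩ | ⟨h1, h2⟩ <;>
  · obtain rfl := hinj hi (by omega) h1
    have := hinj (by omega) (by omega) h2
    omega

end CMCodim2

open CMCodim2 MvPolynomial
theorem statement14_general (K : Type*) [Field K] {n m : ℕ}
    (d : Fin (m + 1) → (Fin n →₀ ℕ)) (I : Ideal (MvPolynomial (Fin n) K))
    (hgen : MinGens K m d I) (hlin : HasLinearRes K m d) :
    (∀ (v : Fin (m + 1)) (w : (taylorGraph K m d).Walk v v), w.IsCycle →
        ∀ a ∈ w.support, ∀ b ∈ w.support, a ≠ b → (taylorGraph K m d).Adj a b) ∧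
      IsChordal (taylorGraph K m d) := by
  have hclique (v : Fin (m + 1)) (w : (taylorGraph K m d).Walk v v) (hw : w.IsCycle) :
      ∀ a ∈ w.support, ∀ b ∈ w.support, a ≠ b → (taylorGraph K m d).Adj a b :=
    fun _ ha _ hb hab => taylorGraph_adj_of_mem_support_of_isCycle hgen.injective hlin hw ha hb hab
  exact ⟨hclique, isChordal_of_forall_isCycle_adj hclique⟩

/-- Let `I ⊂ S` be a Cohen–Macaulay monomial ideal of codimension 2
with a linear resolution, and `G(I)` its Taylor graph. If `C` is a cycle in `G(I)`,
then the restriction of `G(I)` to the vertex set of `C` is a complete graph: any two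
distinct vertices of `C` are adjacent in `G(I)`. In particular, `G(I)` is chordal. -/
theorem statement14 (K : Type*) [Field K] {n m : ℕ}
    (d : Fin (m + 1) → (Fin n →₀ ℕ)) (I : Ideal (MvPolynomial (Fin n) K))
    (hgen : MinGens K m d I) (hcm : IsCMCodim2 I) (hlin : HasLinearRes K m d) :
    (∀ (v : Fin (m + 1)) (w : (taylorGraph K m d).Walk v v), w.IsCycle →
        ∀ a ∈ w.support, ∀ b ∈ w.support, a ≠ b → (taylorGraph K m d).Adj a b) ∧
      IsChordal (taylorGraph K m d) :=
  statement14_general K d I hgen hlin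
end
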